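/- arXiv:2512.24252 — 11 statements merged into one kernel-verified Lean document; each statement's English description precedes it below -/
import Mathlib

section
/- Let (S,K,I) be a split graph and let u,v be two distinct vertices of the independent set I. Then the number of induced P4's of S containing both u and v equals (deg_S(u) − η)·(deg_S(v) − η), where η = |N_S(u) ∩ N_S(v)|. Equivalently, σ_{uv}(S) = |N_S(u) \ N_S(v)| · |N_S(v) \ N_S(u)|. -/
/-!
In a split graph with independent part `I`, every induced path `a - b - c - d` has its ends in `I`
and its inner vertices outside `I`: an inner vertex in `I` would force both of its path-neighbours
into the clique, making them adjacent. So for distinct `u, v ∈ I` the induced `P4`'s through both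
are exactly the paths `u - a - b - v` with `a ∈ N(u) \ N(v)` and `b ∈ N(v) \ N(u)`, and the pair
`(a, b)` is recovered from such a path as the unique neighbours of `u` and of `v` in it.
-/

open SimpleGraph

/-- `T` is a 4-element vertex subset of `S` whose induced subgraph is a path on 4 vertices. -/
def IsInducedP4 {V : Type*} (S : SimpleGraph V) (T : Finset V) : Prop :=
  T.card = 4 ∧ Nonempty (S.induce (T : Set V) ≃g pathGraph 4)

/-- `σ_{uv}(S)`: the number of induced `P4`'s of `S` containing both `u` and `v`. -/
noncomputable def sigmaP4 {V : Type*} (S : SimpleGraph V) (u v : V) : ℕ :=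
  Nat.card {T : Finset V // IsInducedP4 S T ∧ u ∈ T ∧ v ∈ T}

open Finset

namespace SimpleGraph

variable {V : Type*} {S : SimpleGraph V}

lemma isInducedP4_iff_exists_embedding {T : Finset V} :
    IsInducedP4 S T ↔ ∃ f : pathGraph 4 ↪g S, T = univ.map f.toEmbedding := by
  constructor
  · rintro ⟨-, ⟨e⟩⟩
    refine ⟨(Embedding.induce (T : Set V)).comp e.symm.toEmbedding, ?_⟩
    ext x
    simp only [mem_map, mem_univ, true_and]
    exact ⟨fun hx => ⟨e ⟨x, hx⟩, by simp⟩, by rintro ⟨i, rfl⟩; exact (e.symm i).2⟩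
  · rintro ⟨f, rfl⟩
    refine ⟨by simp, ?_⟩
    have hrange : ((univ.map f.toEmbedding : Finset V) : Set V) = Set.range f := by simp
    rw [hrange]
    exact ⟨f.isoInduceRange.symm⟩

lemma IsInducedP4.exists_adj [DecidableEq V] {T : Finset V} (hT : IsInducedP4 S T) :
    ∃ a b c d, T = {a, b, c, d} ∧ S.Adj a b ∧ S.Adj b c ∧ S.Adj c d ∧
      ¬ S.Adj a c ∧ ¬ S.Adj b d ∧ a ≠ c ∧ b ≠ d := by
  obtain ⟨f, rfl⟩ := isInducedP4_iff_exists_embedding.1 hT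
  refine ⟨f 0, f 1, f 2, f 3, ?_, ?_, ?_, ?_, ?_, ?_, ?_, ?_⟩
  · ext x
    simp [Fin.exists_fin_succ, eq_comm]
  all_goals first
    | exact f.map_adj_iff.2 (by simp [pathGraph_adj])
    | exact fun h => absurd (f.map_adj_iff.1 h) (by simp [pathGraph_adj])
    | exact f.injective.ne (by decide)

lemma isInducedP4_of_adj [DecidableEq V] {a b c d : V} (hab : S.Adj a b) (hbc : S.Adj b c)
    (hcd : S.Adj c d) (hac : ¬ S.Adj a c) (hbd : ¬ S.Adj b d) (had : ¬ S.Adj a d)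
    (hac' : a ≠ c) (hbd' : b ≠ d) (had' : a ≠ d) :
    IsInducedP4 S {a, b, c, d} := by
  have hinj : Function.Injective ![a, b, c, d] := by
    intro i j h
    fin_cases i <;> fin_cases j <;> simp_all [hab.ne, hbc.ne, hcd.ne, eq_comm]
  let f : pathGraph 4 ↪g S :=
    ⟨⟨![a, b, c, d], hinj⟩, fun {i j} => by
      fin_cases i <;> fin_cases j <;> simp_all [pathGraph_adj, adj_comm]⟩
  refine isInducedP4_iff_exists_embedding.2 ⟨f, ?_⟩
  ext x
  simp [f, Fin.exists_fin_succ, eq_comm]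

lemma card_neighborFinset_sdiff [Fintype V] [DecidableEq V] [DecidableRel S.Adj] (u v : V) :
    (S.neighborFinset u \ S.neighborFinset v).card =
      S.degree u - (S.neighborFinset u ∩ S.neighborFinset v).card := by
  rw [card_sdiff, inter_comm, card_neighborFinset_eq_degree]

lemma filter_adj_insert_eq_singleton [DecidableEq V] [DecidableRel S.Adj] {u a b v : V}
    (huv : ¬ S.Adj u v) (hua : S.Adj u a) (hub : ¬ S.Adj u b) :
    ({u, a, b, v} : Finset V).filter (S.Adj u) = {a} := by
  ext x
  simp only [mem_filter, mem_insert, mem_singleton]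
  constructor
  · rintro ⟨rfl | rfl | rfl | rfl, h⟩
    exacts [absurd h S.irrefl, rfl, absurd h hub, absurd h huv]
  · rintro rfl
    exact ⟨by simp, hua⟩

lemma injOn_insert_insert_insert_singleton [DecidableEq V] {u v : V} (huv : ¬ S.Adj u v) :
    Set.InjOn (fun p : V × V => ({u, p.1, p.2, v} : Finset V))
      {p | (S.Adj u p.1 ∧ ¬ S.Adj v p.1) ∧ S.Adj v p.2 ∧ ¬ S.Adj u p.2} := by
  classical
  rintro ⟨a, b⟩ ⟨⟨hua, hva⟩, hvb, hub⟩ ⟨a', b'⟩ ⟨⟨hua', hva'⟩, hvb', hub'⟩ h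
  have hswap : ∀ x y : V, ({u, x, y, v} : Finset V) = {v, y, x, u} := by
    intro x y; ext; simp only [mem_insert, mem_singleton]; tauto
  have hvu : ¬ S.Adj v u := fun h => huv h.symm
  simp only at h
  have ha := congrArg (filter (S.Adj u)) h
  have hb := congrArg (filter (S.Adj v)) h
  rw [filter_adj_insert_eq_singleton huv hua hub,
    filter_adj_insert_eq_singleton huv hua' hub'] at ha
  rw [hswap, hswap, filter_adj_insert_eq_singleton hvu hvb hva,
    filter_adj_insert_eq_singleton hvu hvb' hva'] at hb
  exact Prod.ext (singleton_inj.1 ha) (singleton_inj.1 hb)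

section Split

variable {I : Set V}

lemma notMem_of_adj_of_mem (hI : Sᶜ.IsClique I) {u x : V} (hu : u ∈ I) (h : S.Adj u x) :
    x ∉ I :=
  fun hx => (hI hu hx h.ne).2 h

lemma mem_or_mem_of_not_adj (hIc : S.IsClique Iᶜ) {x y : V} (hne : x ≠ y) (h : ¬ S.Adj x y) :
    x ∈ I ∨ y ∈ I := by
  by_contra! hxy
  exact h (hIc hxy.1 hxy.2 hne)

lemma induced_path_ends_mem_inner_notMem (hI : Sᶜ.IsClique I) (hIc : S.IsClique Iᶜ)
    {a b c d : V} (hab : S.Adj a b) (hbc : S.Adj b c) (hcd : S.Adj c d) (hac : ¬ S.Adj a c)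
    (hbd : ¬ S.Adj b d) (hac' : a ≠ c) (hbd' : b ≠ d) :
    a ∈ I ∧ b ∉ I ∧ c ∉ I ∧ d ∈ I := by
  have hb : b ∉ I := fun hb => (mem_or_mem_of_not_adj hIc hac' hac).elim
    (notMem_of_adj_of_mem hI hb hab.symm) (notMem_of_adj_of_mem hI hb hbc)
  have hc : c ∉ I := fun hc => (mem_or_mem_of_not_adj hIc hbd' hbd).elim
    (notMem_of_adj_of_mem hI hc hbc.symm) (notMem_of_adj_of_mem hI hc hcd)
  exact ⟨(mem_or_mem_of_not_adj hIc hac' hac).resolve_right hc, hb, hc,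
    (mem_or_mem_of_not_adj hIc hbd' hbd).resolve_left hb⟩

variable [Fintype V] [DecidableEq V] [DecidableRel S.Adj]

lemma isInducedP4_and_mem_and_mem_iff (hI : Sᶜ.IsClique I) (hIc : S.IsClique Iᶜ) {u v : V}
    (hu : u ∈ I) (hv : v ∈ I) (huv : u ≠ v) (T : Finset V) :
    (IsInducedP4 S T ∧ u ∈ T ∧ v ∈ T) ↔
      T ∈ ((S.neighborFinset u \ S.neighborFinset v) ×ˢ
        (S.neighborFinset v \ S.neighborFinset u)).image fun p => {u, p.1, p.2, v} := by
  have huv' : ¬ S.Adj u v := (hI hu hv huv).2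
  simp only [mem_image, mem_product, mem_sdiff, mem_neighborFinset, Prod.exists]
  constructor
  · rintro ⟨hT, huT, hvT⟩
    obtain ⟨a, b, c, d, rfl, hab, hbc, hcd, hac, hbd, hac', hbd'⟩ := hT.exists_adj
    obtain ⟨ha, hb, hc, hd⟩ :=
      induced_path_ends_mem_inner_notMem hI hIc hab hbc hcd hac hbd hac' hbd'
    have hends : ∀ w ∈ I, w ∈ ({a, b, c, d} : Finset V) → w = a ∨ w = d := by
      intro w hw hwT
      simp only [mem_insert, mem_singleton] at hwT
      rcases hwT with rfl | rfl | rfl | rfl <;> simp_all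
    rcases hends u hu huT with rfl | rfl <;> rcases hends v hv hvT with rfl | rfl
    · exact absurd rfl huv
    · exact ⟨b, c, ⟨⟨hab, fun h => hbd h.symm⟩, hcd.symm, hac⟩, rfl⟩
    · refine ⟨c, b, ⟨⟨hcd.symm, hac⟩, hab, fun h => hbd h.symm⟩, ?_⟩
      ext; simp only [mem_insert, mem_singleton]; tauto
    · exact absurd rfl huv
  · rintro ⟨a, b, ⟨⟨hua, hva⟩, hvb, hub⟩, rfl⟩
    have hab : S.Adj a b := hIc (notMem_of_adj_of_mem hI hu hua)
      (notMem_of_adj_of_mem hI hv hvb) (by rintro rfl; exact hva hvb)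
    refine ⟨isInducedP4_of_adj hua hab hvb.symm hub (fun h => hva h.symm) huv' ?_ ?_ huv,
      by simp, by simp⟩
    · rintro rfl; exact huv' hvb.symm
    · rintro rfl; exact huv' hua

lemma sigmaP4_eq_card_mul_card (hI : Sᶜ.IsClique I) (hIc : S.IsClique Iᶜ) {u v : V}
    (hu : u ∈ I) (hv : v ∈ I) (huv : u ≠ v) :
    sigmaP4 S u v = (S.neighborFinset u \ S.neighborFinset v).card *
      (S.neighborFinset v \ S.neighborFinset u).card := by
  rw [sigmaP4, Nat.card_congr (Equiv.subtypeEquivRight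
      (isInducedP4_and_mem_and_mem_iff hI hIc hu hv huv)), Nat.card_eq_finsetCard,
    card_image_of_injOn, card_product]
  intro p hp q hq
  exact injOn_insert_insert_insert_singleton (hI hu hv huv).2
    (by simpa using hp) (by simpa using hq)

end Split

end SimpleGraph

theorem stmt0_general {V : Type*} [Fintype V] [DecidableEq V]
    (S : SimpleGraph V) [DecidableRel S.Adj] (K I : Finset V)
    (hpart : K ∪ I = Finset.univ)
    (hK : S.IsClique (K : Set V)) (hI : Sᶜ.IsClique (I : Set V))
    (u v : V) (hu : u ∈ I) (hv : v ∈ I) (huv : u ≠ v) :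
    sigmaP4 S u v =
      (S.degree u - (S.neighborFinset u ∩ S.neighborFinset v).card) *
        (S.degree v - (S.neighborFinset u ∩ S.neighborFinset v).card) ∧
    sigmaP4 S u v =
      (S.neighborFinset u \ S.neighborFinset v).card *
        (S.neighborFinset v \ S.neighborFinset u).card := by
  have hIc : S.IsClique (I : Set V)ᶜ := hK.subset fun x hx =>
    (mem_union.1 (hpart ▸ mem_univ x)).resolve_right hx
  have hσ := sigmaP4_eq_card_mul_card hI hIc hu hv huv
  refine ⟨?_, hσ⟩
  rw [hσ, card_neighborFinset_sdiff, card_neighborFinset_sdiff, inter_comm]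

theorem stmt0 {V : Type*} [Fintype V] [DecidableEq V] [Nonempty V]
    (S : SimpleGraph V) [DecidableRel S.Adj] (K I : Finset V)
    (hpart : K ∪ I = Finset.univ) (hdisj : Disjoint K I)
    (hK : S.IsClique (K : Set V)) (hI : Sᶜ.IsClique (I : Set V))
    (u v : V) (hu : u ∈ I) (hv : v ∈ I) (huv : u ≠ v) :
    sigmaP4 S u v =
      (S.degree u - (S.neighborFinset u ∩ S.neighborFinset v).card) *
        (S.degree v - (S.neighborFinset u ∩ S.neighborFinset v).card) ∧
    sigmaP4 S u v =
      (S.neighborFinset u \ S.neighborFinset v).card *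
        (S.neighborFinset v \ S.neighborFinset u).card :=
  stmt0_general S K I hpart hK hI u v hu hv huv
end

section
/- Let (S,K,I) be a split graph and let u,v be distinct vertices of I. Then σ_{uv}(S) = 0 and deg_S(v) ≤ deg_S(u) hold if and only if N_S(v) ⊆ N_S(u). -/
open SimpleGraph

/-!
In a split graph every neighbour of a vertex of `I` lies in `K`, so the neighbourhood of a vertex
of `I` is a clique. Hence an inner vertex of an induced path `a - b - c - d` is never in `I` (its
neighbours on the path are not adjacent), so two vertices `u, v ∈ I` of an induced `P4` are its
endpoints and each has a neighbour on the path that the other lacks. Conversely, if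
`w ∈ N(v) \ N(u)` and `x ∈ N(u) \ N(v)`, then `w, x ∈ K` are adjacent and `v - w - x - u` is an
induced `P4`. So `σ_{uv} = 0` exactly when `N(u)` and `N(v)` are nested, and the degree condition
picks the inclusion `N(v) ⊆ N(u)`.
-/

namespace SimpleGraph

variable {V : Type*} {S : SimpleGraph V}

structure IsInducedPath4 (S : SimpleGraph V) (a b c d : V) : Prop where
  adj_ab : S.Adj a b
  adj_bc : S.Adj b c
  adj_cd : S.Adj c d
  not_adj_ac : ¬S.Adj a c
  not_adj_ad : ¬S.Adj a d
  not_adj_bd : ¬S.Adj b d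

namespace IsInducedPath4

variable {a b c d : V}

lemma reverse (h : S.IsInducedPath4 a b c d) : S.IsInducedPath4 d c b a :=
  ⟨h.adj_cd.symm, h.adj_bc.symm, h.adj_ab.symm, fun h' => h.not_adj_bd h'.symm,
    fun h' => h.not_adj_ad h'.symm, fun h' => h.not_adj_ac h'.symm⟩

lemma not_neighborSet_subset (h : S.IsInducedPath4 a b c d) :
    ¬S.neighborSet d ⊆ S.neighborSet a :=
  fun hsub => h.not_adj_ac (hsub h.adj_cd.symm)

lemma ne_ac (h : S.IsInducedPath4 a b c d) : a ≠ c := fun e => h.not_adj_ad (e ▸ h.adj_cd)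

lemma ne_bd (h : S.IsInducedPath4 a b c d) : b ≠ d := fun e => h.not_adj_ad (e ▸ h.adj_ab)

lemma ne_ad (h : S.IsInducedPath4 a b c d) : a ≠ d := fun e => h.not_adj_ac (e ▸ h.adj_cd.symm)

def toEmbedding (h : S.IsInducedPath4 a b c d) : pathGraph 4 ↪g S where
  toFun := ![a, b, c, d]
  inj' := by
    have hr := h.reverse
    intro i j hij
    fin_cases i <;> fin_cases j <;>
      simp_all [h.adj_ab.ne, h.adj_bc.ne, h.adj_cd.ne, h.ne_ac, h.ne_bd, h.ne_ad,
        hr.adj_ab.ne, hr.adj_bc.ne, hr.adj_cd.ne, hr.ne_ac, hr.ne_bd, hr.ne_ad]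
  map_rel_iff' := by
    have hr := h.reverse
    intro i j
    change S.Adj (![a, b, c, d] i) (![a, b, c, d] j) ↔ _
    fin_cases i <;> fin_cases j <;>
      simp [pathGraph_adj, h.adj_ab, h.adj_bc, h.adj_cd, h.not_adj_ac, h.not_adj_ad, h.not_adj_bd,
        hr.adj_ab, hr.adj_bc, hr.adj_cd, hr.not_adj_ac, hr.not_adj_ad, hr.not_adj_bd]

lemma range_toEmbedding (h : S.IsInducedPath4 a b c d) :
    Set.range h.toEmbedding = {a, b, c, d} := by
  change Set.range ![a, b, c, d] = _
  simp only [Matrix.range_cons, Matrix.range_empty, Set.union_empty, Set.singleton_union]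

end IsInducedPath4

lemma isInducedP4_of_iso {T : Finset V} (φ : S.induce (T : Set V) ≃g pathGraph 4) :
    IsInducedP4 S T := by
  refine ⟨?_, ⟨φ⟩⟩
  simpa using Fintype.card_congr φ.toEquiv

lemma IsInducedPath4.isInducedP4 [DecidableEq V] {a b c d : V} (h : S.IsInducedPath4 a b c d) :
    IsInducedP4 S {a, b, c, d} := by
  have hrange : (({a, b, c, d} : Finset V) : Set V) = Set.range h.toEmbedding := by
    simp [h.range_toEmbedding]
  exact isInducedP4_of_iso (hrange ▸ h.toEmbedding.isoInduceRange.symm)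

lemma IsInducedP4.exists_isInducedPath4 [DecidableEq V] {T : Finset V} (hT : IsInducedP4 S T) :
    ∃ a b c d, S.IsInducedPath4 a b c d ∧ T = {a, b, c, d} := by
  obtain ⟨-, ⟨φ⟩⟩ := hT
  let f : pathGraph 4 ↪g S := (Embedding.induce _).comp φ.symm.toEmbedding
  have hadj : ∀ i j, S.Adj (f i) (f j) ↔ (i : ℕ) + 1 = j ∨ (j : ℕ) + 1 = i := fun i j => by
    rw [f.map_adj_iff, pathGraph_adj]
  refine ⟨f 0, f 1, f 2, f 3, ⟨(hadj 0 1).2 (by decide), (hadj 1 2).2 (by decide),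
    (hadj 2 3).2 (by decide), fun h => absurd ((hadj 0 2).1 h) (by decide),
    fun h => absurd ((hadj 0 3).1 h) (by decide), fun h => absurd ((hadj 1 3).1 h) (by decide)⟩, ?_⟩
  have hrange : Set.range f = T := by
    ext x
    constructor
    · rintro ⟨i, rfl⟩
      exact (φ.symm i).2
    · intro hx
      exact ⟨φ ⟨x, hx⟩, by simp [f]⟩
  apply Finset.coe_injective
  rw [← hrange]
  clear_value f
  ext x
  simp [Fin.exists_fin_succ, eq_comm]

section SplitGraph

variable {K I : Set V}

lemma mem_of_adj_of_mem_indepSet (hcover : K ∪ I = Set.univ) (hI : S.IsIndepSet I) {w z : V}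
    (hadj : S.Adj w z) (hz : z ∈ I) : w ∈ K := by
  have hw : w ∈ K ∪ I := hcover ▸ Set.mem_univ w
  exact hw.resolve_right fun hwI => hI hwI hz hadj.ne hadj

lemma isClique_neighborSet_of_mem_indepSet (hcover : K ∪ I = Set.univ) (hK : S.IsClique K)
    (hI : S.IsIndepSet I) {z : V} (hz : z ∈ I) : S.IsClique (S.neighborSet z) :=
  hK.subset fun _ hw => mem_of_adj_of_mem_indepSet hcover hI (S.adj_symm hw) hz

namespace IsInducedPath4

variable {a b c d : V}

lemma second_notMem (hcover : K ∪ I = Set.univ) (hK : S.IsClique K) (hI : S.IsIndepSet I)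
    (h : S.IsInducedPath4 a b c d) : b ∉ I := fun hb =>
  h.not_adj_ac <| isClique_neighborSet_of_mem_indepSet hcover hK hI hb h.adj_ab.symm h.adj_bc
    h.ne_ac

lemma not_neighborSet_subset_of_mem_indepSet [DecidableEq V] (hcover : K ∪ I = Set.univ)
    (hK : S.IsClique K) (hI : S.IsIndepSet I) (h : S.IsInducedPath4 a b c d) {u v : V}
    (hu : u ∈ I) (hv : v ∈ I) (huv : u ≠ v) (huT : u ∈ ({a, b, c, d} : Finset V))
    (hvT : v ∈ ({a, b, c, d} : Finset V)) : ¬S.neighborSet v ⊆ S.neighborSet u := by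
  have endpoint : ∀ x ∈ I, x ∈ ({a, b, c, d} : Finset V) → x = a ∨ x = d := by
    intro x hx hxT
    simp only [Finset.mem_insert, Finset.mem_singleton] at hxT
    rcases hxT with rfl | rfl | rfl | rfl
    exacts [.inl rfl, (h.second_notMem hcover hK hI hx).elim,
      (h.reverse.second_notMem hcover hK hI hx).elim, .inr rfl]
  rcases endpoint u hu huT with rfl | rfl <;> rcases endpoint v hv hvT with rfl | rfl
  · exact absurd rfl huv
  · exact h.not_neighborSet_subset
  · exact h.reverse.not_neighborSet_subset
  · exact absurd rfl huv

end IsInducedPath4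

theorem sigmaP4_eq_zero_iff [Finite V] [DecidableEq V] (hcover : K ∪ I = Set.univ)
    (hK : S.IsClique K) (hI : S.IsIndepSet I) {u v : V} (hu : u ∈ I) (hv : v ∈ I)
    (huv : u ≠ v) :
    sigmaP4 S u v = 0 ↔ S.neighborSet v ⊆ S.neighborSet u ∨ S.neighborSet u ⊆ S.neighborSet v := by
  rw [sigmaP4, Nat.card_eq_zero, or_iff_left (Finite.not_infinite inferInstance), isEmpty_subtype]
  constructor
  · intro hnone
    by_contra! ⟨hvu, huv'⟩
    obtain ⟨w, hvw, huw⟩ := Set.not_subset.mp hvu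
    obtain ⟨x, hux, hvx⟩ := Set.not_subset.mp huv'
    have hwx : S.Adj w x := hK (mem_of_adj_of_mem_indepSet hcover hI (S.adj_symm hvw) hv)
      (mem_of_adj_of_mem_indepSet hcover hI (S.adj_symm hux) hu) (by rintro rfl; exact hvx hvw)
    have hpath : S.IsInducedPath4 v w x u :=
      ⟨hvw, hwx, S.adj_symm hux, hvx, hI hv hu huv.symm, fun h => huw (S.adj_symm h)⟩
    exact hnone _ ⟨hpath.isInducedP4, by simp, by simp⟩
  · rintro hsub T ⟨hT, huT, hvT⟩
    obtain ⟨a, b, c, d, hpath, rfl⟩ := hT.exists_isInducedPath4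
    rcases hsub with hsub | hsub
    exacts [hpath.not_neighborSet_subset_of_mem_indepSet hcover hK hI hu hv huv huT hvT hsub,
      hpath.not_neighborSet_subset_of_mem_indepSet hcover hK hI hv hu huv.symm hvT huT hsub]

end SplitGraph

end SimpleGraph

theorem stmt1_general {V : Type*} [Fintype V] [DecidableEq V]
    (S : SimpleGraph V) [DecidableRel S.Adj] (K I : Finset V)
    (hpart : K ∪ I = Finset.univ)
    (hK : S.IsClique (K : Set V)) (hI : Sᶜ.IsClique (I : Set V))
    (u v : V) (hu : u ∈ I) (hv : v ∈ I) (huv : u ≠ v) :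
    (sigmaP4 S u v = 0 ∧ S.degree v ≤ S.degree u) ↔
      S.neighborFinset v ⊆ S.neighborFinset u := by
  have hcover : (K : Set V) ∪ I = Set.univ := by
    rw [← Finset.coe_union, hpart, Finset.coe_univ]
  have hsubset (x y : V) :
      S.neighborFinset x ⊆ S.neighborFinset y ↔ S.neighborSet x ⊆ S.neighborSet y := by
    rw [← Finset.coe_subset, coe_neighborFinset, coe_neighborFinset]
  rw [sigmaP4_eq_zero_iff hcover hK ((isClique_compl S).mp hI) hu hv huv, ← hsubset, ← hsubset,
    ← card_neighborFinset_eq_degree, ← card_neighborFinset_eq_degree]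
  constructor
  · rintro ⟨hvu | huv', hcard⟩
    · exact hvu
    · exact (Finset.eq_of_subset_of_card_le huv' hcard).ge
  · exact fun hvu => ⟨.inl hvu, Finset.card_le_card hvu⟩

theorem stmt1 {V : Type*} [Fintype V] [DecidableEq V] [Nonempty V]
    (S : SimpleGraph V) [DecidableRel S.Adj] (K I : Finset V)
    (hpart : K ∪ I = Finset.univ) (hdisj : Disjoint K I)
    (hK : S.IsClique (K : Set V)) (hI : Sᶜ.IsClique (I : Set V))
    (u v : V) (hu : u ∈ I) (hv : v ∈ I) (huv : u ≠ v) :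
    (sigmaP4 S u v = 0 ∧ S.degree v ≤ S.degree u) ↔
      S.neighborFinset v ⊆ S.neighborFinset u :=
  stmt1_general S K I hpart hK hI u v hu hv huv
end

section
/- Let (S,K,I) be a split graph and let u,v be distinct vertices of I. Then σ_{uv}(S) = 0 and deg_S(u) = deg_S(v) hold if and only if N_S(u) = N_S(v). -/
open SimpleGraph

lemma build_p4 {V : Type*} [DecidableEq V] (S : SimpleGraph V) (w0 w1 w2 w3 : V)
    (h01 : S.Adj w0 w1) (h12 : S.Adj w1 w2) (h23 : S.Adj w2 w3)
    (h02 : ¬S.Adj w0 w2) (h03 : ¬S.Adj w0 w3) (h13 : ¬S.Adj w1 w3) :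
    IsInducedP4 S {w0, w1, w2, w3} := by
  have n01 : w0 ≠ w1 := h01.ne
  have n12 : w1 ≠ w2 := h12.ne
  have n23 : w2 ≠ w3 := h23.ne
  have n02 : w0 ≠ w2 := by rintro rfl; exact h03 h23
  have n03 : w0 ≠ w3 := by rintro rfl; exact h13 h01.symm
  have n13 : w1 ≠ w3 := by rintro rfl; exact h03 h01
  have h10 : S.Adj w1 w0 := h01.symm
  have h21 : S.Adj w2 w1 := h12.symm
  have h32 : S.Adj w3 w2 := h23.symm
  have h20 : ¬S.Adj w2 w0 := fun h => h02 h.symm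
  have h30 : ¬S.Adj w3 w0 := fun h => h03 h.symm
  have h31 : ¬S.Adj w3 w1 := fun h => h13 h.symm
  set T : Finset V := {w0, w1, w2, w3} with hT
  have m0 : w0 ∈ (T : Set V) := by simp [hT]
  have m1 : w1 ∈ (T : Set V) := by simp [hT]
  have m2 : w2 ∈ (T : Set V) := by simp [hT]
  have m3 : w3 ∈ (T : Set V) := by simp [hT]
  have hcard : T.card = 4 := by
    rw [hT]
    rw [Finset.card_insert_of_notMem (by simp [n01, n02, n03]),
        Finset.card_insert_of_notMem (by simp [n12, n13]),
        Finset.card_insert_of_notMem (by simp [n23]), Finset.card_singleton]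
  refine ⟨hcard, ?_⟩
  let g : Fin 4 → (T : Set V) := ![⟨w0, m0⟩, ⟨w1, m1⟩, ⟨w2, m2⟩, ⟨w3, m3⟩]
  have hg : Function.Bijective g := by
    constructor
    · intro i j h
      fin_cases i <;> fin_cases j <;>
        simp_all [g, Subtype.ext_iff, n01, n02, n03, n12, n13, n23,
          n01.symm, n02.symm, n03.symm, n12.symm, n13.symm, n23.symm]
    · rintro ⟨x, hx⟩
      simp only [hT, Finset.coe_insert, Set.mem_insert_iff, Finset.coe_singleton,
        Set.mem_singleton_iff] at hx
      rcases hx with rfl | rfl | rfl | rfl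
      exacts [⟨0, rfl⟩, ⟨1, rfl⟩, ⟨2, rfl⟩, ⟨3, rfl⟩]
  refine ⟨(RelIso.mk (Equiv.ofBijective g hg) ?_).symm⟩
  intro i j
  fin_cases i <;> fin_cases j <;>
    simp [g, Equiv.ofBijective, pathGraph_adj, comap_adj, Function.Embedding.coe_subtype,
      h01, h12, h23, h02, h03, h13, h10, h21, h32, h20, h30, h31, S.irrefl,
      show ((3 : Fin 4) : ℕ) = 3 from rfl] <;>
    first
      | exact h01 | exact h10 | exact h12 | exact h21 | exact h23 | exact h32
      | exact h02 | exact h20 | exact h03 | exact h30 | exact h13 | exact h31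

theorem stmt2 {V : Type*} [Fintype V] [DecidableEq V] [Nonempty V]
    (S : SimpleGraph V) [DecidableRel S.Adj] (K I : Finset V)
    (hpart : K ∪ I = Finset.univ) (hdisj : Disjoint K I)
    (hK : S.IsClique (K : Set V)) (hI : Sᶜ.IsClique (I : Set V))
    (u v : V) (hu : u ∈ I) (hv : v ∈ I) (huv : u ≠ v) :
    (sigmaP4 S u v = 0 ∧ S.degree u = S.degree v) ↔
      S.neighborFinset u = S.neighborFinset v := by
  have hnuv : ¬S.Adj u v := by
    have := hI (Finset.mem_coe.mpr hu) (Finset.mem_coe.mpr hv) huv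
    exact ((S.compl_adj _ _).mp this).2
  constructor
  · rintro ⟨hσ, hdeg⟩
    by_contra hne
    have hdeg' : (S.neighborFinset u).card = (S.neighborFinset v).card := hdeg
    have hNu : ¬ S.neighborFinset u ⊆ S.neighborFinset v := fun h =>
      hne (Finset.eq_of_subset_of_card_le h (le_of_eq hdeg'.symm))
    have hNv : ¬ S.neighborFinset v ⊆ S.neighborFinset u := fun h =>
      hne (Finset.eq_of_subset_of_card_le h (le_of_eq hdeg')).symm
    obtain ⟨a, ha, hav⟩ := Finset.not_subset.mp hNu
    obtain ⟨b, hb, hbu⟩ := Finset.not_subset.mp hNv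
    have hua : S.Adj u a := (S.mem_neighborFinset u a).mp ha
    have hvb : S.Adj v b := (S.mem_neighborFinset v b).mp hb
    have hnva : ¬S.Adj v a := fun h => hav ((S.mem_neighborFinset v a).mpr h)
    have hnub : ¬S.Adj u b := fun h => hbu ((S.mem_neighborFinset u b).mpr h)
    have hmemK : ∀ x : V, S.Adj u x ∨ S.Adj v x → x ∈ K := by
      intro x hx
      have hxU : x ∈ K ∪ I := hpart ▸ Finset.mem_univ x
      rcases Finset.mem_union.mp hxU with h | h
      · exact h
      · exfalso
        rcases hx with hx | hx
        · exact ((S.compl_adj _ _).mp (hI (Finset.mem_coe.mpr hu) (Finset.mem_coe.mpr h) hx.ne)).2 hx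
        · exact ((S.compl_adj _ _).mp (hI (Finset.mem_coe.mpr hv) (Finset.mem_coe.mpr h) hx.ne)).2 hx
    have haK : a ∈ K := hmemK a (Or.inl hua)
    have hbK : b ∈ K := hmemK b (Or.inr hvb)
    have hab : a ≠ b := by rintro rfl; exact hav hb
    have hadjab : S.Adj a b := hK (Finset.mem_coe.mpr haK) (Finset.mem_coe.mpr hbK) hab
    have hp4 := build_p4 S u a b v hua hadjab hvb.symm hnub hnuv (fun h => hnva h.symm)
    have hne0 : Nat.card {T : Finset V // IsInducedP4 S T ∧ u ∈ T ∧ v ∈ T} ≠ 0 :=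
      Nat.card_ne_zero.mpr ⟨⟨⟨{u, a, b, v}, hp4, by simp, by simp⟩⟩, inferInstance⟩
    exact hne0 hσ
  · intro hN
    constructor
    · refine Nat.card_eq_zero.mpr (Or.inl ?_)
      constructor
      rintro ⟨T, ⟨hcard, ⟨e⟩⟩, hut, hvt⟩
      have hmu : u ∈ (T : Set V) := Finset.mem_coe.mpr hut
      have hmv : v ∈ (T : Set V) := Finset.mem_coe.mpr hvt
      have hne' : e ⟨u, hmu⟩ ≠ e ⟨v, hmv⟩ := by
        intro h
        exact huv (congrArg Subtype.val (e.toEquiv.injective h))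
      have hnadj' : ¬(pathGraph 4).Adj (e ⟨u, hmu⟩) (e ⟨v, hmv⟩) := by
        intro h
        exact hnuv (e.map_rel_iff.mp h)
      have key : ∀ i j : Fin 4, i ≠ j → ¬(pathGraph 4).Adj i j →
          ∃ k, ((pathGraph 4).Adj i k ∧ ¬(pathGraph 4).Adj j k) ∨
            ((pathGraph 4).Adj j k ∧ ¬(pathGraph 4).Adj i k) := by
        simp only [pathGraph_adj]; decide
      obtain ⟨k, hk⟩ := key _ _ hne' hnadj'
      have hadj_iff : ∀ (x : V) (hx : x ∈ (T : Set V)),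
          (pathGraph 4).Adj (e ⟨x, hx⟩) k ↔ S.Adj x ↑(e.symm k) := by
        intro x hx
        conv_lhs => rw [show k = e (e.symm k) by simp]
        exact e.map_rel_iff
      have hmemNuv : (↑(e.symm k) ∈ S.neighborFinset u) ↔ (↑(e.symm k) ∈ S.neighborFinset v) := by
        rw [hN]
      rcases hk with ⟨h1, h2⟩ | ⟨h1, h2⟩
      · exact h2 (((hadj_iff v hmv).mpr
          ((S.mem_neighborFinset v _).mp (hmemNuv.mp
            ((S.mem_neighborFinset u _).mpr ((hadj_iff u hmu).mp h1))))))
      · exact h2 (((hadj_iff u hmu).mpr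
          ((S.mem_neighborFinset u _).mp (hmemNuv.mpr
            ((S.mem_neighborFinset v _).mpr ((hadj_iff v hmv).mp h1))))))
    · show (S.neighborFinset u).card = (S.neighborFinset v).card
      rw [hN]
end

section
/- Let (S,K,I) be a split graph and let u,v be distinct vertices of I. If σ_{uv}(S) = 1, then deg_S(u) = deg_S(v) and |N_S(u) \ N_S(v)| = |N_S(v) \ N_S(u)| = 1. -/
open SimpleGraph

lemma padj {i j : Fin 4} (h : i.val + 1 = j.val ∨ j.val + 1 = i.val) : (pathGraph 4).Adj i j :=
  pathGraph_adj.mpr h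

lemma pnadj {i j : Fin 4} (h : ¬(i.val + 1 = j.val ∨ j.val + 1 = i.val)) :
    ¬(pathGraph 4).Adj i j := fun hh => h (pathGraph_adj.mp hh)

lemma card4 {V : Type*} [DecidableEq V] {w0 w1 w2 w3 : V}
    (d01 : w0 ≠ w1) (d02 : w0 ≠ w2) (d03 : w0 ≠ w3) (d12 : w1 ≠ w2)
    (d13 : w1 ≠ w3) (d23 : w2 ≠ w3) :
    ({w0, w1, w2, w3} : Finset V).card = 4 := by
  rw [Finset.card_insert_of_notMem (by simp [d01, d02, d03]),
    Finset.card_insert_of_notMem (by simp [d12, d13]),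
    Finset.card_insert_of_notMem (by simp [d23]), Finset.card_singleton]

lemma mkP4 {V : Type*} [DecidableEq V] (S : SimpleGraph V) {w0 w1 w2 w3 : V}
    (d01 : w0 ≠ w1) (d02 : w0 ≠ w2) (d03 : w0 ≠ w3) (d12 : w1 ≠ w2)
    (d13 : w1 ≠ w3) (d23 : w2 ≠ w3)
    (a01 : S.Adj w0 w1) (a12 : S.Adj w1 w2) (a23 : S.Adj w2 w3)
    (n02 : ¬ S.Adj w0 w2) (n03 : ¬ S.Adj w0 w3) (n13 : ¬ S.Adj w1 w3) :
    IsInducedP4 S {w0, w1, w2, w3} := by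
  refine ⟨card4 d01 d02 d03 d12 d13 d23, ?_⟩
  have m0 : w0 ∈ (({w0, w1, w2, w3} : Finset V) : Set V) := by simp
  have m1 : w1 ∈ (({w0, w1, w2, w3} : Finset V) : Set V) := by simp
  have m2 : w2 ∈ (({w0, w1, w2, w3} : Finset V) : Set V) := by simp
  have m3 : w3 ∈ (({w0, w1, w2, w3} : Finset V) : Set V) := by simp
  let f : Fin 4 → (({w0, w1, w2, w3} : Finset V) : Set V) :=
    ![⟨w0, m0⟩, ⟨w1, m1⟩, ⟨w2, m2⟩, ⟨w3, m3⟩]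
  have hinj : Function.Injective f := by
    intro i j h
    fin_cases i <;> fin_cases j <;>
      simp_all [f, Subtype.ext_iff, d01, d02, d03, d12, d13, d23, d01.symm, d02.symm,
        d03.symm, d12.symm, d13.symm, d23.symm]
  have hsurj : Function.Surjective f := by
    rintro ⟨w, hw⟩
    simp only [Finset.coe_insert, Set.mem_insert_iff, Finset.coe_singleton,
      Set.mem_singleton_iff] at hw
    rcases hw with rfl | rfl | rfl | rfl
    exacts [⟨0, rfl⟩, ⟨1, rfl⟩, ⟨2, rfl⟩, ⟨3, rfl⟩]
  let e := Equiv.ofBijective f ⟨hinj, hsurj⟩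
  refine ⟨⟨e.symm, ?_⟩⟩
  intro a b
  obtain ⟨i, rfl⟩ := e.surjective a
  obtain ⟨j, rfl⟩ := e.surjective b
  simp only [Equiv.symm_apply_apply]
  show (pathGraph 4).Adj i j ↔ (S.induce _).Adj (e i) (e j)
  have he : ∀ k, e k = f k := fun _ => rfl
  rw [he, he]
  have key : ∀ i j : Fin 4, ((pathGraph 4).Adj i j ↔ S.Adj ((f i) : V) ((f j) : V)) := by
    intro i j
    fin_cases i <;> fin_cases j
    · exact iff_of_false (pnadj (by decide)) (S.irrefl)
    · exact iff_of_true (padj (by decide)) a01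
    · exact iff_of_false (pnadj (by decide)) n02
    · exact iff_of_false (pnadj (by decide)) n03
    · exact iff_of_true (padj (by decide)) a01.symm
    · exact iff_of_false (pnadj (by decide)) (S.irrefl)
    · exact iff_of_true (padj (by decide)) a12
    · exact iff_of_false (pnadj (by decide)) n13
    · exact iff_of_false (pnadj (by decide)) (fun h => n02 h.symm)
    · exact iff_of_true (padj (by decide)) a12.symm
    · exact iff_of_false (pnadj (by decide)) (S.irrefl)
    · exact iff_of_true (padj (by decide)) a23
    · exact iff_of_false (pnadj (by decide)) (fun h => n03 h.symm)
    · exact iff_of_false (pnadj (by decide)) (fun h => n13 h.symm)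
    · exact iff_of_true (padj (by decide)) a23.symm
    · exact iff_of_false (pnadj (by decide)) (S.irrefl)
  exact (key i j).trans (Iff.rfl)

def A4 (i j : Fin 4) : Prop := i.val + 1 = j.val ∨ j.val + 1 = i.val

instance : DecidableRel A4 := fun i j => by unfold A4; infer_instance

lemma A4_adj {i j : Fin 4} : (pathGraph 4).Adj i j ↔ A4 i j := pathGraph_adj

lemma adj_mem_K {V : Type*} [Fintype V] [DecidableEq V] (S : SimpleGraph V) (K I : Finset V)
    (hpart : K ∪ I = Finset.univ) (hI : Sᶜ.IsClique (I : Set V))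
    {w z : V} (hw : w ∈ I) (ha : S.Adj w z) : z ∈ K := by
  by_contra hz
  have hzI : z ∈ I := by
    have : z ∈ K ∪ I := hpart ▸ Finset.mem_univ z
    rcases Finset.mem_union.mp this with h | h
    · exact absurd h hz
    · exact h
  exact (hI (by simpa using hw) (by simpa using hzI) ha.ne).2 ha

lemma keyP4 {V : Type*} [Fintype V] [DecidableEq V]
    (S : SimpleGraph V) [DecidableRel S.Adj] (K I : Finset V)
    (hpart : K ∪ I = Finset.univ)
    (hK : S.IsClique (K : Set V)) (hI : Sᶜ.IsClique (I : Set V))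
    {u v : V} (hu : u ∈ I) (hv : v ∈ I) (huv : u ≠ v)
    {T : Finset V} (hT : IsInducedP4 S T) (hut : u ∈ T) (hvt : v ∈ T) :
    ∃ x y, x ∈ S.neighborFinset u \ S.neighborFinset v ∧
      y ∈ S.neighborFinset v \ S.neighborFinset u ∧ T = {u, x, y, v} := by
  obtain ⟨hc, ⟨e⟩⟩ := hT
  have hnadj : ¬S.Adj u v :=
    (hI (by simpa using hu) (by simpa using hv) huv).2
  set g : Fin 4 → V := fun i => (e.symm i : V) with hg
  have ginj : Function.Injective g := fun i j h => e.symm.injective (Subtype.ext h)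
  have gmem : ∀ i, g i ∈ T := fun i => by
    exact Finset.mem_coe.mp (e.symm i).2
  have tr : ∀ i j : Fin 4, S.Adj (g i) (g j) ↔ A4 i j := by
    intro i j
    have h1 := e.map_rel_iff (a := e.symm i) (b := e.symm j)
    rw [RelIso.apply_symm_apply, RelIso.apply_symm_apply] at h1
    rw [← A4_adj]
    exact (h1.symm : (S.induce (T : Set V)).Adj (e.symm i) (e.symm j) ↔ _)
  set p : Fin 4 := e ⟨u, by simpa using hut⟩ with hpd
  set q : Fin 4 := e ⟨v, by simpa using hvt⟩ with hqd
  have hp : g p = u := congrArg Subtype.val (e.symm_apply_apply _)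
  have hq : g q = v := congrArg Subtype.val (e.symm_apply_apply _)
  have hpq : p ≠ q := fun h => huv (by rw [← hp, ← hq, h])
  have hnA : ¬A4 p q := fun h => hnadj (by rw [← hp, ← hq]; exact (tr p q).mpr h)
  have hTimg : T = Finset.univ.image g := by
    apply Finset.eq_of_subset_of_card_le
    · intro w hw
      refine Finset.mem_image.mpr ⟨e ⟨w, by simpa using hw⟩, Finset.mem_univ _, ?_⟩
      exact congrArg Subtype.val (e.symm_apply_apply _)
    · calc (Finset.univ.image g).card ≤ (Finset.univ : Finset (Fin 4)).card :=
            Finset.card_image_le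
        _ = 4 := by simp
        _ = T.card := hc.symm
  have main : ∀ p q : Fin 4, p ≠ q → ¬A4 p q →
      ∃ r s : Fin 4,
        (({p, r, s, q} : Finset (Fin 4)) = Finset.univ ∧
          A4 p r ∧ A4 r s ∧ A4 s q ∧ ¬A4 p s ∧ ¬A4 r q) ∨
        (r ≠ s ∧ ¬A4 r s ∧ (A4 p r ∨ A4 q r) ∧ (A4 p s ∨ A4 q s)) := by decide
  obtain ⟨r, s, hcase⟩ := main p q hpq hnA
  rcases hcase with ⟨hset, a_pr, a_rs, a_sq, n_ps, n_rq⟩ | ⟨hrs, n_rs, hr, hs⟩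
  · refine ⟨g r, g s, ?_, ?_, ?_⟩
    · rw [Finset.mem_sdiff, mem_neighborFinset, mem_neighborFinset]
      constructor
      · rw [← hp]; exact (tr p r).mpr a_pr
      · intro h
        exact n_rq ((tr r q).mp (by rw [hq]; exact h.symm))
    · rw [Finset.mem_sdiff, mem_neighborFinset, mem_neighborFinset]
      constructor
      · have := (tr s q).mpr a_sq
        rw [hq] at this; exact this.symm
      · intro h
        exact n_ps ((tr p s).mp (by rw [hp]; exact h))
    · rw [hTimg, ← hset]
      rw [Finset.image_insert, Finset.image_insert, Finset.image_insert,
        Finset.image_singleton, hp, hq]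
  · exfalso
    have hxK : g r ∈ K := by
      rcases hr with h | h
      · exact adj_mem_K S K I hpart hI hu (by rw [← hp]; exact (tr p r).mpr h)
      · exact adj_mem_K S K I hpart hI hv (by rw [← hq]; exact (tr q r).mpr h)
    have hyK : g s ∈ K := by
      rcases hs with h | h
      · exact adj_mem_K S K I hpart hI hu (by rw [← hp]; exact (tr p s).mpr h)
      · exact adj_mem_K S K I hpart hI hv (by rw [← hq]; exact (tr q s).mpr h)
    have hne : g r ≠ g s := fun h => hrs (ginj h)
    exact (fun h => n_rs ((tr r s).mp h)) (hK (by simpa using hxK) (by simpa using hyK) hne)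

theorem stmt4 {V : Type*} [Fintype V] [DecidableEq V] [Nonempty V]
    (S : SimpleGraph V) [DecidableRel S.Adj] (K I : Finset V)
    (hpart : K ∪ I = Finset.univ) (hdisj : Disjoint K I)
    (hK : S.IsClique (K : Set V)) (hI : Sᶜ.IsClique (I : Set V))
    (u v : V) (hu : u ∈ I) (hv : v ∈ I) (huv : u ≠ v)
    (hs : sigmaP4 S u v = 1) :
    S.degree u = S.degree v ∧
      (S.neighborFinset u \ S.neighborFinset v).card = 1 ∧
      (S.neighborFinset v \ S.neighborFinset u).card = 1 := by
  have hnadj : ¬S.Adj u v := (hI (by simpa using hu) (by simpa using hv) huv).2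
  set A := S.neighborFinset u \ S.neighborFinset v with hA
  set B := S.neighborFinset v \ S.neighborFinset u with hB
  have hxA : ∀ x ∈ A, S.Adj u x ∧ ¬S.Adj v x := fun x hx => by
    rw [hA, Finset.mem_sdiff, mem_neighborFinset, mem_neighborFinset] at hx; exact hx
  have hyB : ∀ y ∈ B, S.Adj v y ∧ ¬S.Adj u y := fun y hy => by
    rw [hB, Finset.mem_sdiff, mem_neighborFinset, mem_neighborFinset] at hy; exact hy
  have mk : ∀ x ∈ A, ∀ y ∈ B, IsInducedP4 S {u, x, y, v} := by
    intro x hx y hy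
    obtain ⟨hux, hnvx⟩ := hxA x hx
    obtain ⟨hvy, hnuy⟩ := hyB y hy
    have hxK : x ∈ K := adj_mem_K S K I hpart hI hu hux
    have hyK : y ∈ K := adj_mem_K S K I hpart hI hv hvy
    have dux : u ≠ x := fun h => S.irrefl (h ▸ hux)
    have duy : u ≠ y := by rintro rfl; exact Finset.disjoint_left.mp hdisj hyK hu
    have dxy : x ≠ y := fun h => hnuy (h ▸ hux)
    have dxv : x ≠ v := fun h => hnadj (h ▸ hux)
    have dyv : y ≠ v := by rintro rfl; exact S.irrefl hvy
    have axy : S.Adj x y := hK (by simpa using hxK) (by simpa using hyK) dxy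
    exact mkP4 S dux duy huv dxy dxv dyv hux axy hvy.symm hnuy hnadj
      (fun h => hnvx h.symm)
  have hcard : sigmaP4 S u v = A.card * B.card := by
    let F : ↥A × ↥B → {T : Finset V // IsInducedP4 S T ∧ u ∈ T ∧ v ∈ T} :=
      fun z => ⟨{u, z.1.1, z.2.1, v}, mk z.1.1 z.1.2 z.2.1 z.2.2, by simp, by simp⟩
    have hFbij : Function.Bijective F := by
      constructor
      · rintro ⟨⟨x, hx⟩, ⟨y, hy⟩⟩ ⟨⟨x', hx'⟩, ⟨y', hy'⟩⟩ h
        have hset : ({u, x, y, v} : Finset V) = {u, x', y', v} :=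
          congrArg Subtype.val h
        obtain ⟨hux, hnvx⟩ := hxA x hx
        obtain ⟨hvy, hnuy⟩ := hyB y hy
        obtain ⟨hux', hnvx'⟩ := hxA x' hx'
        obtain ⟨hvy', hnuy'⟩ := hyB y' hy'
        have hxmem : x ∈ ({u, x', y', v} : Finset V) := by
          rw [← hset]; simp
        have hx_eq : x = x' := by
          simp only [Finset.mem_insert, Finset.mem_singleton] at hxmem
          rcases hxmem with h | h | h | h
          · exact absurd (h ▸ hux) (S.irrefl)
          · exact h
          · exact absurd (h ▸ hux) hnuy'
          · exact absurd (h ▸ hux) hnadj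
        have hymem : y ∈ ({u, x', y', v} : Finset V) := by
          rw [← hset]; simp
        have hy_eq : y = y' := by
          simp only [Finset.mem_insert, Finset.mem_singleton] at hymem
          rcases hymem with h | h | h | h
          · exact absurd (h ▸ hvy) (fun hh => hnadj hh.symm)
          · exact absurd (h ▸ hvy) hnvx'
          · exact h
          · exact absurd (h ▸ hvy) (S.irrefl)
        subst hx_eq; subst hy_eq; rfl
      · rintro ⟨T, hT, hut, hvt⟩
        obtain ⟨x, y, hx, hy, hTeq⟩ := keyP4 S K I hpart hK hI hu hv huv hT hut hvt
        exact ⟨(⟨x, hx⟩, ⟨y, hy⟩), Subtype.ext hTeq.symm⟩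
    rw [sigmaP4, ← Nat.card_congr (Equiv.ofBijective F hFbij),
      Nat.card_prod, Nat.card_eq_finsetCard, Nat.card_eq_finsetCard]
  rw [hcard] at hs
  obtain ⟨hA1, hB1⟩ := mul_eq_one.mp hs
  refine ⟨?_, hA1, hB1⟩
  have h1 := Finset.card_sdiff_add_card_inter (S.neighborFinset u) (S.neighborFinset v)
  have h2 := Finset.card_sdiff_add_card_inter (S.neighborFinset v) (S.neighborFinset u)
  rw [Finset.inter_comm] at h2
  rw [← hA] at h1
  rw [← hB] at h2
  show (S.neighborFinset u).card = (S.neighborFinset v).card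
  omega
end

section
/- Let (S,K,I) be a split graph and let u,v be distinct vertices of I with deg_S(u) ≥ deg_S(v). If σ_{uv}(S) = p for a prime number p, then |N_S(u) \ N_S(v)| = p, |N_S(v) \ N_S(u)| = 1, and deg_S(u) − deg_S(v) = p − 1. -/
open SimpleGraph

/-!
Neighbours of vertices of `I` lie in the clique `K`, and the only split partition of `P₄` has
the two endpoints as its independent part. Hence the induced `P₄`'s through `u, v ∈ I` are
exactly the paths `u - a - b - v` with `a ∈ N(u) \ N(v)` and `b ∈ N(v) \ N(u)`, so
`σ_{uv} = |N(u) \ N(v)| · |N(v) \ N(u)|`. The degree condition makes the second factor the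
smaller one, and primality forces it to be `1`.
-/

open Finset

lemma isInducedP4_iff {V : Type*} [DecidableEq V] (S : SimpleGraph V) (T : Finset V) :
    IsInducedP4 S T ↔ ∃ w : Fin 4 → V, Function.Injective w ∧
      (∀ i j, S.Adj (w i) (w j) ↔ (pathGraph 4).Adj i j) ∧ univ.image w = T := by
  constructor
  · rintro ⟨-, ⟨e⟩⟩
    refine ⟨fun i => e.symm i, fun i j h => e.symm.injective (Subtype.ext h),
      fun i j => e.symm.map_adj_iff, ?_⟩
    ext x
    simp only [mem_image, mem_univ, true_and]
    exact ⟨by rintro ⟨i, rfl⟩; exact (e.symm i).2,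
      fun hx => ⟨e ⟨x, hx⟩, congrArg Subtype.val (e.symm_apply_apply _)⟩⟩
  · rintro ⟨w, hinj, hw, rfl⟩
    refine ⟨by simp [card_image_of_injective _ hinj], ⟨?_⟩⟩
    have hrange : ((univ.image w : Finset V) : Set V) = Set.range w := by simp
    rw [hrange]
    exact (Embedding.isoInduceRange ⟨⟨w, hinj⟩, hw _ _⟩).symm

lemma image_univ_fin_four {V : Type*} [DecidableEq V] (w : Fin 4 → V) :
    univ.image w = {w 0, w 1, w 2, w 3} := by
  ext x
  simp [Fin.exists_fin_succ, eq_comm]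

lemma isInducedP4_of_adj {V : Type*} [DecidableEq V] {S : SimpleGraph V} {u a b v : V}
    (hua : S.Adj u a) (hab : S.Adj a b) (hbv : S.Adj b v)
    (hub : ¬ S.Adj u b) (hav : ¬ S.Adj a v) (huv : ¬ S.Adj u v) :
    IsInducedP4 S {u, a, b, v} := by
  have hub' : u ≠ b := by rintro rfl; exact huv hbv
  have hav' : a ≠ v := by rintro rfl; exact huv hua
  have huv' : u ≠ v := by rintro rfl; exact hav hua.symm
  refine (isInducedP4_iff S _).2
    ⟨![u, a, b, v], ?_, fun i j => ?_, by simp [image_univ_fin_four]⟩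
  · intro i j h
    fin_cases i <;> fin_cases j <;>
      simp_all [hua.ne, hab.ne, hbv.ne, hua.ne.symm, hab.ne.symm, hbv.ne.symm, eq_comm]
  · fin_cases i <;> fin_cases j <;>
      simp [pathGraph_adj, hua, hab, hbv, hub, hav, huv, hua.symm, hab.symm, hbv.symm,
        S.adj_comm b u, S.adj_comm v u, S.adj_comm v a]

/-- `J` is the independent part of a split partition of `P₄`. -/
lemma pathGraph_four_eq_of_split (J : Finset (Fin 4))
    (hJ : ∀ i j, i ∈ J → j ∈ J → ¬ (pathGraph 4).Adj i j)
    (hJc : ∀ i j, i ∉ J → j ∉ J → i ≠ j → (pathGraph 4).Adj i j) : J = {0, 3} := by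
  simp only [pathGraph_adj] at hJ hJc
  revert J
  decide

section SplitGraph

variable {V : Type*} [Fintype V] [DecidableEq V] {S : SimpleGraph V} {K I : Finset V}

lemma mem_of_adj_of_isClique_compl (hpart : K ∪ I = univ) (hI : Sᶜ.IsClique (I : Set V))
    {x y : V} (hx : x ∈ I) (hxy : S.Adj x y) : y ∈ K := by
  have hy : y ∈ K ∪ I := hpart ▸ mem_univ y
  rcases mem_union.1 hy with hy | hy
  · exact hy
  · exact absurd hxy (hI hx hy hxy.ne).2

variable [DecidableRel S.Adj]

lemma exists_eq_of_isInducedP4 (hpart : K ∪ I = univ) (hK : S.IsClique (K : Set V))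
    (hI : Sᶜ.IsClique (I : Set V)) {u v : V} (hu : u ∈ I) (hv : v ∈ I) (huv : u ≠ v)
    {T : Finset V} (hT : IsInducedP4 S T) (huT : u ∈ T) (hvT : v ∈ T) :
    ∃ a ∈ S.neighborFinset u \ S.neighborFinset v,
      ∃ b ∈ S.neighborFinset v \ S.neighborFinset u, T = {u, a, b, v} := by
  obtain ⟨w, hinj, hw, rfl⟩ := (isInducedP4_iff S T).1 hT
  have hK' : ∀ i, w i ∉ I → w i ∈ K := fun i hi =>
    (mem_union.1 (hpart ▸ mem_univ (w i))).resolve_right hi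
  have hends : univ.filter (fun i => w i ∈ I) = {0, 3} := by
    refine pathGraph_four_eq_of_split _ (fun i j hi hj hij => ?_) (fun i j hi hj hij => ?_)
    · simp only [mem_filter, mem_univ, true_and] at hi hj
      exact (hI hi hj (hinj.ne hij.ne)).2 ((hw i j).2 hij)
    · simp only [mem_filter, mem_univ, true_and] at hi hj
      exact (hw i j).1 (hK (hK' i hi) (hK' j hj) (hinj.ne hij))
  obtain ⟨iu, -, rfl⟩ := mem_image.1 huT
  obtain ⟨iv, -, rfl⟩ := mem_image.1 hvT
  have hiu : iu ∈ ({0, 3} : Finset (Fin 4)) := hends ▸ mem_filter.2 ⟨mem_univ _, hu⟩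
  have hiv : iv ∈ ({0, 3} : Finset (Fin 4)) := hends ▸ mem_filter.2 ⟨mem_univ _, hv⟩
  simp only [mem_insert, mem_singleton] at hiu hiv
  rw [image_univ_fin_four]
  rcases hiu with rfl | rfl <;> rcases hiv with rfl | rfl
  · exact absurd rfl huv
  · exact ⟨w 1, by simp [hw, pathGraph_adj], w 2, by simp [hw, pathGraph_adj], rfl⟩
  · refine ⟨w 2, by simp [hw, pathGraph_adj], w 1, by simp [hw, pathGraph_adj], ?_⟩
    ext
    simp only [mem_insert, mem_singleton]
    tauto
  · exact absurd rfl huv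

lemma isInducedP4_of_mem_sdiff (hpart : K ∪ I = univ) (hK : S.IsClique (K : Set V))
    (hI : Sᶜ.IsClique (I : Set V)) {u v a b : V} (hu : u ∈ I) (hv : v ∈ I) (huv : u ≠ v)
    (ha : a ∈ S.neighborFinset u \ S.neighborFinset v)
    (hb : b ∈ S.neighborFinset v \ S.neighborFinset u) :
    IsInducedP4 S {u, a, b, v} := by
  simp only [mem_sdiff, mem_neighborFinset] at ha hb
  have hab : S.Adj a b :=
    hK (mem_of_adj_of_isClique_compl hpart hI hu ha.1)
      (mem_of_adj_of_isClique_compl hpart hI hv hb.1) (by rintro rfl; exact ha.2 hb.1)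
  exact isInducedP4_of_adj ha.1 hab hb.1.symm hb.2 (mt Adj.symm ha.2) (hI hu hv huv).2

lemma eq_of_mem_sdiff_of_mem_insert {u v a a' b' : V} (huv : ¬ S.Adj u v)
    (ha : a ∈ S.neighborFinset u \ S.neighborFinset v)
    (hb' : b' ∈ S.neighborFinset v \ S.neighborFinset u)
    (h : a ∈ ({u, a', b', v} : Finset V)) : a = a' := by
  simp only [mem_sdiff, mem_neighborFinset] at ha hb'
  simp only [mem_insert, mem_singleton] at h
  rcases h with rfl | h | rfl | rfl
  · exact absurd ha.1 S.irrefl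
  · exact h
  · exact absurd hb'.1 ha.2
  · exact absurd ha.1 huv

theorem sigmaP4_eq_card_mul_card (hpart : K ∪ I = univ) (hK : S.IsClique (K : Set V))
    (hI : Sᶜ.IsClique (I : Set V)) {u v : V} (hu : u ∈ I) (hv : v ∈ I) (huv : u ≠ v) :
    sigmaP4 S u v =
      #(S.neighborFinset u \ S.neighborFinset v) * #(S.neighborFinset v \ S.neighborFinset u) := by
  set A := S.neighborFinset u \ S.neighborFinset v
  set B := S.neighborFinset v \ S.neighborFinset u
  have hnuv : ¬ S.Adj u v := (hI hu hv huv).2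
  have hmem : ∀ T, (IsInducedP4 S T ∧ u ∈ T ∧ v ∈ T) ↔
      T ∈ (A ×ˢ B).image (fun ab => ({u, ab.1, ab.2, v} : Finset V)) := by
    intro T
    simp only [mem_image, mem_product, Prod.exists]
    constructor
    · rintro ⟨hT, huT, hvT⟩
      obtain ⟨a, ha, b, hb, rfl⟩ := exists_eq_of_isInducedP4 hpart hK hI hu hv huv hT huT hvT
      exact ⟨a, b, ⟨ha, hb⟩, rfl⟩
    · rintro ⟨a, b, ⟨ha, hb⟩, rfl⟩
      exact ⟨isInducedP4_of_mem_sdiff hpart hK hI hu hv huv ha hb, by simp, by simp⟩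
  have hinj : Set.InjOn (fun ab : V × V => ({u, ab.1, ab.2, v} : Finset V)) ↑(A ×ˢ B) := by
    rintro ⟨a, b⟩ hab ⟨a', b'⟩ hab' h
    simp only [coe_product, Set.mem_prod, mem_coe] at hab hab' h
    refine Prod.ext (eq_of_mem_sdiff_of_mem_insert hnuv hab.1 hab'.2 (h ▸ by simp))
      (eq_of_mem_sdiff_of_mem_insert (mt Adj.symm hnuv) hab.2 hab'.1 ?_)
    have hb : b ∈ ({u, a', b', v} : Finset V) := h ▸ by simp
    simp only [mem_insert, mem_singleton] at hb ⊢
    tauto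
  rw [sigmaP4, Nat.card_congr (Equiv.subtypeEquivRight hmem), Nat.card_eq_fintype_card,
    Fintype.card_coe, card_image_of_injOn hinj, card_product]

end SplitGraph

theorem stmt5_general {V : Type*} [Fintype V] [DecidableEq V]
    (S : SimpleGraph V) [DecidableRel S.Adj] (K I : Finset V)
    (hpart : K ∪ I = Finset.univ)
    (hK : S.IsClique (K : Set V)) (hI : Sᶜ.IsClique (I : Set V))
    (u v : V) (hu : u ∈ I) (hv : v ∈ I) (huv : u ≠ v)
    (hdeg : S.degree v ≤ S.degree u)
    (p : ℕ) (hp : p.Prime) (hs : sigmaP4 S u v = p) :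
    (S.neighborFinset u \ S.neighborFinset v).card = p ∧
      (S.neighborFinset v \ S.neighborFinset u).card = 1 ∧
      S.degree u - S.degree v = p - 1 := by
  set A := S.neighborFinset u \ S.neighborFinset v
  set B := S.neighborFinset v \ S.neighborFinset u
  have hcount : #A * #B = p := hs ▸ (sigmaP4_eq_card_mul_card hpart hK hI hu hv huv).symm
  have hBA : #B ≤ #A :=
    card_sdiff_le_card_sdiff_iff.2 (by simpa only [card_neighborFinset_eq_degree] using hdeg)
  obtain ⟨hA, hB⟩ : #A = p ∧ #B = 1 := by
    rcases Nat.prime_mul_iff.1 (hcount ▸ hp) with ⟨-, hB⟩ | ⟨hBp, hA⟩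
    · exact ⟨by simpa [hB] using hcount, hB⟩
    · exact absurd (hA ▸ hBA) hBp.one_lt.not_ge
  refine ⟨hA, hB, ?_⟩
  rw [← card_neighborFinset_eq_degree, ← card_neighborFinset_eq_degree, card_sub_card_eq,
    hA, hB]

theorem stmt5 {V : Type*} [Fintype V] [DecidableEq V] [Nonempty V]
    (S : SimpleGraph V) [DecidableRel S.Adj] (K I : Finset V)
    (hpart : K ∪ I = Finset.univ) (hdisj : Disjoint K I)
    (hK : S.IsClique (K : Set V)) (hI : Sᶜ.IsClique (I : Set V))
    (u v : V) (hu : u ∈ I) (hv : v ∈ I) (huv : u ≠ v)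
    (hdeg : S.degree v ≤ S.degree u)
    (p : ℕ) (hp : p.Prime) (hs : sigmaP4 S u v = p) :
    (S.neighborFinset u \ S.neighborFinset v).card = p ∧
      (S.neighborFinset v \ S.neighborFinset u).card = 1 ∧
      S.degree u - S.degree v = p - 1 :=
  stmt5_general S K I hpart hK hI u v hu hv huv hdeg p hp hs
end

section
/- Let (S,K,I) be a split graph with no isolated vertices and let u,v be distinct vertices of I. Then σ_{uv}(S) = deg_S(u)·deg_S(v) if and only if N_S(u) ∩ N_S(v) = ∅. -/
open SimpleGraph

section Aux

variable {V : Type*} [DecidableEq V] {S : SimpleGraph V} {u v : V}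

/-- Construction: given a path configuration `u - b - c - v`, the set `{u,b,c,v}` is an
induced `P4`. -/
lemma p4_mk (hnadj : ¬ S.Adj u v) {b c : V}
    (hub : S.Adj u b) (hvb : ¬ S.Adj v b) (hvc : S.Adj v c) (huc : ¬ S.Adj u c)
    (hbc : S.Adj b c) : IsInducedP4 S {u, b, c, v} := by
  have hnadj' : ¬ S.Adj v u := fun h => hnadj h.symm
  have hbu : b ≠ u := fun h => S.irrefl (h ▸ hub)
  have hcv : c ≠ v := fun h => S.irrefl (h ▸ hvc)
  have hbv : b ≠ v := fun h => hnadj (h ▸ hub)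
  have hcu : c ≠ u := fun h => hnadj' (h ▸ hvc)
  have hbc' : b ≠ c := fun h => huc (h ▸ hub)
  have huv : u ≠ v := fun h => hvb (h ▸ hub)
  have hvb' : ¬ S.Adj b v := fun h => hvb h.symm
  have hcu' : ¬ S.Adj c u := fun h => huc h.symm
  have hcard : ({u, b, c, v} : Finset V).card = 4 := by
    rw [Finset.card_insert_of_notMem (by simp [hbu.symm, hcu.symm, huv]),
      Finset.card_insert_of_notMem (by simp [hbc', hbv]),
      Finset.card_insert_of_notMem (by simp [hcv]), Finset.card_singleton]
  refine ⟨hcard, ?_⟩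
  set T : Finset V := {u, b, c, v} with hT
  let f : Fin 4 → (T : Set V) :=
    ![⟨u, by simp [hT]⟩, ⟨b, by simp [hT]⟩, ⟨c, by simp [hT]⟩, ⟨v, by simp [hT]⟩]
  have hbijf : Function.Bijective f := by
    rw [Fintype.bijective_iff_injective_and_card]
    constructor
    · intro i j h
      fin_cases i <;> fin_cases j <;>
        simp_all [f, hbu, hcu, huv, hbc', hbv, hcv, hbu.symm, hcu.symm, huv.symm, hbc'.symm,
          hbv.symm, hcv.symm, Subtype.ext_iff]
    · simp [Finset.coe_sort_coe, Fintype.card_coe, hcard]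
  have hmap : ∀ i j : Fin 4,
      (S.induce (T : Set V)).Adj (f i) (f j) ↔ (pathGraph 4).Adj i j := by
    intro i j
    fin_cases i <;> fin_cases j <;>
        simp [f, pathGraph_adj, comap_adj] <;>
      first
        | exact hub
        | exact hub.symm
        | exact hvc
        | exact hvc.symm
        | exact hbc
        | exact hbc.symm
        | exact S.irrefl
        | exact hvb
        | exact hvb'
        | exact huc
        | exact hcu'
        | exact hnadj
        | exact hnadj'
        | (refine iff_of_true ?_ (by decide); first | exact hub | exact hub.symm | exact hvc | exact hvc.symm | exact hbc | exact hbc.symm)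
        | (refine iff_of_false ?_ (by decide); first | exact S.irrefl | exact hvb | exact hvb' | exact huc | exact hcu' | exact hnadj | exact hnadj')
  exact ⟨(RelIso.mk (Equiv.ofBijective f hbijf) (fun {i j} => hmap i j)).symm⟩

/-- Structure: any induced `P4` containing two nonadjacent vertices `u`, `v` such that any
common pair of neighbors are adjacent has `u`, `v` as its endpoints. -/
lemma p4_struct (hnadj : ¬ S.Adj u v) (huv : u ≠ v)
    (hA : ∀ x y, S.Adj u x → S.Adj v y → x ≠ y → S.Adj x y)
    {T : Finset V} (hT : IsInducedP4 S T) (huT : u ∈ T) (hvT : v ∈ T) :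
    ∃ b c, S.Adj u b ∧ ¬ S.Adj v b ∧ S.Adj v c ∧ ¬ S.Adj u c ∧ T = {u, b, c, v} := by
  classical
  obtain ⟨hcard, ⟨e⟩⟩ := hT
  set φ : Fin 4 → V := fun i => (e.symm i : V) with hφ
  have hφinj : Function.Injective φ := fun i j h =>
    e.symm.toEquiv.injective (Subtype.ext h)
  have hadj : ∀ i j, S.Adj (φ i) (φ j) ↔ (pathGraph 4).Adj i j := by
    intro i j
    simpa [comap_adj] using e.symm.map_adj_iff (v := i) (w := j)
  have hsurj : ∀ x ∈ T, ∃ i, φ i = x := by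
    intro x hx
    exact ⟨e ⟨x, hx⟩, by simp [hφ]⟩
  have hTim : T = Finset.image φ Finset.univ := by
    refine (Finset.eq_of_subset_of_card_le ?_ ?_).symm
    · intro x hx
      simp only [Finset.mem_image] at hx
      obtain ⟨i, _, rfl⟩ := hx
      exact (e.symm i).2
    · rw [Finset.card_image_of_injective _ hφinj, Finset.card_univ, Fintype.card_fin, hcard]
  have univ4 : (Finset.univ : Finset (Fin 4)) = {0, 1, 2, 3} := by decide
  have hTim' : T = {φ 0, φ 1, φ 2, φ 3} := by
    rw [hTim, univ4]
    simp [Finset.image_insert]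
  obtain ⟨i, hi⟩ := hsurj u huT
  obtain ⟨j, hj⟩ := hsurj v hvT
  have hij : i ≠ j := fun h => huv (by rw [← hi, ← hj, h])
  have hnadjij : ¬ (pathGraph 4).Adj i j := fun h => hnadj (hi ▸ hj ▸ (hadj i j).mpr h)
  have padj : ∀ p q : Fin 4, (p.val + 1 = q.val ∨ q.val + 1 = p.val) → (pathGraph 4).Adj p q :=
    fun p q h => pathGraph_adj.mpr h
  have pnadj : ∀ p q : Fin 4, ¬ (p.val + 1 = q.val ∨ q.val + 1 = p.val) →
      ¬ (pathGraph 4).Adj p q := fun p q h h' => h (pathGraph_adj.mp h')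
  have contra : ∀ p q : Fin 4, (pathGraph 4).Adj i p → (pathGraph 4).Adj j q → p ≠ q →
      ¬ (pathGraph 4).Adj p q → False := by
    intro p q h1 h2 hpq h3
    refine h3 ((hadj p q).mp (hA _ _ ?_ ?_ (fun h => hpq (hφinj h))))
    · exact hi ▸ (hadj i p).mpr h1
    · exact hj ▸ (hadj j q).mpr h2
  have hcases : ∀ k : Fin 4, k = 0 ∨ k = 1 ∨ k = 2 ∨ k = 3 := by decide
  have good03 : i = 0 → j = 3 →
      ∃ b c, S.Adj u b ∧ ¬ S.Adj v b ∧ S.Adj v c ∧ ¬ S.Adj u c ∧ T = {u, b, c, v} := by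
    rintro rfl rfl
    refine ⟨φ 1, φ 2, ?_, ?_, ?_, ?_, ?_⟩
    · exact hi ▸ (hadj 0 1).mpr (padj 0 1 (by decide))
    · exact fun h => pnadj 3 1 (by decide) ((hadj 3 1).mp (hj ▸ h))
    · exact hj ▸ (hadj 3 2).mpr (padj 3 2 (by decide))
    · exact fun h => pnadj 0 2 (by decide) ((hadj 0 2).mp (hi ▸ h))
    · rw [hTim', ← hi, ← hj]
  have good30 : i = 3 → j = 0 →
      ∃ b c, S.Adj u b ∧ ¬ S.Adj v b ∧ S.Adj v c ∧ ¬ S.Adj u c ∧ T = {u, b, c, v} := by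
    rintro rfl rfl
    refine ⟨φ 2, φ 1, ?_, ?_, ?_, ?_, ?_⟩
    · exact hi ▸ (hadj 3 2).mpr (padj 3 2 (by decide))
    · exact fun h => pnadj 0 2 (by decide) ((hadj 0 2).mp (hj ▸ h))
    · exact hj ▸ (hadj 0 1).mpr (padj 0 1 (by decide))
    · exact fun h => pnadj 3 1 (by decide) ((hadj 3 1).mp (hi ▸ h))
    · rw [hTim', ← hi, ← hj]
      ext x
      simp only [Finset.mem_insert, Finset.mem_singleton]
      tauto
  rcases hcases i with rfl | rfl | rfl | rfl <;> rcases hcases j with rfl | rfl | rfl | rfl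
  · exact absurd rfl hij
  · exact absurd (padj 0 1 (by decide)) hnadjij
  · exact absurd (contra 1 3 (padj 0 1 (by decide)) (padj 2 3 (by decide)) (by decide)
      (pnadj 1 3 (by decide))) not_false
  · exact good03 rfl rfl
  · exact absurd (padj 1 0 (by decide)) hnadjij
  · exact absurd rfl hij
  · exact absurd (padj 1 2 (by decide)) hnadjij
  · exact absurd (contra 0 2 (padj 1 0 (by decide)) (padj 3 2 (by decide)) (by decide)
      (pnadj 0 2 (by decide))) not_false
  · exact absurd (contra 3 1 (padj 2 3 (by decide)) (padj 0 1 (by decide)) (by decide)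
      (pnadj 3 1 (by decide))) not_false
  · exact absurd (padj 2 1 (by decide)) hnadjij
  · exact absurd rfl hij
  · exact absurd (padj 2 3 (by decide)) hnadjij
  · exact good30 rfl rfl
  · exact absurd (contra 2 0 (padj 3 2 (by decide)) (padj 1 0 (by decide)) (by decide)
      (pnadj 2 0 (by decide))) not_false
  · exact absurd (padj 3 2 (by decide)) hnadjij
  · exact absurd rfl hij

end Aux

theorem stmt7 {V : Type*} [Fintype V] [DecidableEq V] [Nonempty V]
    (S : SimpleGraph V) [DecidableRel S.Adj] (K I : Finset V)
    (hpart : K ∪ I = Finset.univ) (hdisj : Disjoint K I)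
    (hK : S.IsClique (K : Set V)) (hI : Sᶜ.IsClique (I : Set V))
    (hiso : ∀ x : V, 0 < S.degree x)
    (u v : V) (hu : u ∈ I) (hv : v ∈ I) (huv : u ≠ v) :
    sigmaP4 S u v = S.degree u * S.degree v ↔
      S.neighborFinset u ∩ S.neighborFinset v = ∅ := by
  classical
  -- basic consequences of the split structure
  have hInd : ∀ ⦃x y : V⦄, x ∈ I → y ∈ I → x ≠ y → ¬ S.Adj x y := by
    intro x y hx hy hxy h
    exact (hI (Finset.mem_coe.mpr hx) (Finset.mem_coe.mpr hy) hxy).2 h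
  have hnadj : ¬ S.Adj u v := hInd hu hv huv
  have hIK : ∀ x z, z ∈ I → S.Adj z x → x ∈ K := by
    intro x z hz hzx
    by_contra hxK
    have hxI : x ∈ I := by
      have hx := Finset.mem_univ x
      rw [← hpart, Finset.mem_union] at hx
      tauto
    exact hInd hz hxI hzx.ne hzx
  have hA : ∀ x y, S.Adj u x → S.Adj v y → x ≠ y → S.Adj x y := fun x y hx hy hxy =>
    hK (Finset.mem_coe.mpr (hIK x u hu hx)) (Finset.mem_coe.mpr (hIK y v hv hy)) hxy
  set A : Finset V := S.neighborFinset u \ S.neighborFinset v with hAdef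
  set B : Finset V := S.neighborFinset v \ S.neighborFinset u with hBdef
  -- the counting identity
  have hmk : ∀ p : V × V, p ∈ A ×ˢ B →
      IsInducedP4 S {u, p.1, p.2, v} ∧ u ∈ ({u, p.1, p.2, v} : Finset V) ∧
        v ∈ ({u, p.1, p.2, v} : Finset V) := by
    rintro ⟨b, c⟩ hp
    rw [Finset.mem_product] at hp
    obtain ⟨hb, hc⟩ := hp
    rw [hAdef, Finset.mem_sdiff, SimpleGraph.mem_neighborFinset,
      SimpleGraph.mem_neighborFinset] at hb
    rw [hBdef, Finset.mem_sdiff, SimpleGraph.mem_neighborFinset,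
      SimpleGraph.mem_neighborFinset] at hc
    have hbc : S.Adj b c := hA b c hb.1 hc.1 (fun h => hc.2 (h ▸ hb.1))
    exact ⟨p4_mk hnadj hb.1 hb.2 hc.1 hc.2 hbc, by simp, by simp⟩
  let F : ↥(A ×ˢ B) → {T : Finset V // IsInducedP4 S T ∧ u ∈ T ∧ v ∈ T} :=
    fun p => ⟨{u, p.1.1, p.1.2, v}, hmk p.1 p.2⟩
  have hFbij : Function.Bijective F := by
    constructor
    · rintro ⟨⟨b, c⟩, hp⟩ ⟨⟨b', c'⟩, hp'⟩ h
      rw [Finset.mem_product] at hp hp'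
      have hb := hp.1; have hc := hp.2; have hb' := hp'.1; have hc' := hp'.2
      rw [hAdef, Finset.mem_sdiff, SimpleGraph.mem_neighborFinset,
        SimpleGraph.mem_neighborFinset] at hb hb'
      rw [hBdef, Finset.mem_sdiff, SimpleGraph.mem_neighborFinset,
        SimpleGraph.mem_neighborFinset] at hc hc'
      have hseteq : ({u, b, c, v} : Finset V) = {u, b', c', v} := congrArg Subtype.val h
      have hbeq : b = b' := by
        have hbmem : b ∈ ({u, b', c', v} : Finset V) := by
          rw [← hseteq]; simp
        simp only [Finset.mem_insert, Finset.mem_singleton] at hbmem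
        rcases hbmem with rfl | rfl | rfl | rfl
        · exact absurd hb.1 (S.irrefl)
        · rfl
        · exact absurd hb.1 hc'.2
        · exact absurd hb.1 hnadj
      have hceq : c = c' := by
        have hcmem : c ∈ ({u, b', c', v} : Finset V) := by
          rw [← hseteq]; simp
        simp only [Finset.mem_insert, Finset.mem_singleton] at hcmem
        rcases hcmem with rfl | rfl | rfl | rfl
        · exact absurd hc.1 (fun h' => hnadj h'.symm)
        · exact absurd hb'.1 hc.2
        · rfl
        · exact absurd hc.1 (S.irrefl)
      exact Subtype.ext (Prod.ext hbeq hceq)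
    · rintro ⟨T, hT, huT, hvT⟩
      obtain ⟨b, c, h1, h2, h3, h4, h5⟩ := p4_struct hnadj huv hA hT huT hvT
      have hbA : b ∈ A := by
        rw [hAdef, Finset.mem_sdiff, SimpleGraph.mem_neighborFinset,
          SimpleGraph.mem_neighborFinset]
        exact ⟨h1, h2⟩
      have hcB : c ∈ B := by
        rw [hBdef, Finset.mem_sdiff, SimpleGraph.mem_neighborFinset,
          SimpleGraph.mem_neighborFinset]
        exact ⟨h3, h4⟩
      refine ⟨⟨(b, c), Finset.mem_product.mpr ⟨hbA, hcB⟩⟩, ?_⟩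
      exact Subtype.ext h5.symm
  have hcount : sigmaP4 S u v = A.card * B.card := by
    rw [sigmaP4, ← Nat.card_eq_of_bijective F hFbij, Nat.card_eq_fintype_card,
      Fintype.card_coe, Finset.card_product]
  -- degrees
  set m : ℕ := (S.neighborFinset u ∩ S.neighborFinset v).card with hm
  have hdu : S.degree u = A.card + m := by
    rw [SimpleGraph.degree, hAdef, hm, Finset.card_sdiff_add_card_inter]
  have hdv : S.degree v = B.card + m := by
    rw [SimpleGraph.degree, hBdef, hm, Finset.inter_comm, Finset.card_sdiff_add_card_inter]
  rw [hcount, hdu, hdv, ← Finset.card_eq_zero, ← hm]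
  constructor
  · intro h
    by_contra hne
    have hmpos : 0 < m := Nat.pos_of_ne_zero hne
    nlinarith [h, hmpos]
  · intro h
    rw [h]
    ring
end

section
/- Let (S,K,I) be a homogeneous split graph. Then S contains at least one induced P4; in particular, if d is the common degree in S of the vertices of I, then d ≠ 0 and d ≠ |K|. -/
open SimpleGraph

lemma isInducedP4_of_path {V : Type*} [DecidableEq V] (S : SimpleGraph V) (u a b v : V)
    (hua : S.Adj u a) (hab : S.Adj a b) (hbv : S.Adj b v)
    (nub : ¬S.Adj u b) (nuv : ¬S.Adj u v) (nav : ¬S.Adj a v)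
    (huv : u ≠ v) (hub : u ≠ b) (hav : a ≠ v) :
    IsInducedP4 S {u, a, b, v} := by
  have hua' : u ≠ a := hua.ne
  have hab' : a ≠ b := hab.ne
  have hbv' : b ≠ v := hbv.ne
  set T : Finset V := {u, a, b, v} with hT
  have hcard : T.card = 4 := by
    rw [hT]
    rw [Finset.card_insert_of_notMem (by simp [hua', hub, huv]),
        Finset.card_insert_of_notMem (by simp [hab', hav]),
        Finset.card_insert_of_notMem (by simp [hbv'])]
    rfl
  refine ⟨hcard, ?_⟩
  have hm0 : u ∈ (T : Set V) := by simp [hT]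
  have hm1 : a ∈ (T : Set V) := by simp [hT]
  have hm2 : b ∈ (T : Set V) := by simp [hT]
  have hm3 : v ∈ (T : Set V) := by simp [hT]
  let f : Fin 4 → (T : Set V) := ![⟨u, hm0⟩, ⟨a, hm1⟩, ⟨b, hm2⟩, ⟨v, hm3⟩]
  have hfbij : Function.Bijective f := by
    constructor
    · intro i j hij
      fin_cases i <;> fin_cases j <;>
        first
          | rfl
          | (exfalso; simp only [f, Matrix.cons_val_zero, Matrix.cons_val_one, Matrix.head_cons,
              Matrix.cons_val_two, Matrix.tail_cons, Matrix.cons_val_three] at hij;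
             apply_fun Subtype.val at hij;
             first
               | exact hua' hij | exact hua' hij.symm
               | exact hab' hij | exact hab' hij.symm
               | exact hbv' hij | exact hbv' hij.symm
               | exact huv hij | exact huv hij.symm
               | exact hub hij | exact hub hij.symm
               | exact hav hij | exact hav hij.symm)
    · rintro ⟨x, hx⟩
      simp only [hT, Finset.coe_insert, Set.mem_insert_iff, Finset.coe_singleton,
        Finset.mem_insert, Finset.mem_singleton] at hx
      rcases hx with rfl | rfl | rfl | rfl
      · exact ⟨0, rfl⟩
      · exact ⟨1, rfl⟩
      · exact ⟨2, rfl⟩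
      · exact ⟨3, rfl⟩
  let e : Fin 4 ≃ (T : Set V) := Equiv.ofBijective f hfbij
  refine ⟨(RelIso.mk e ?_).symm⟩
  intro i j
  have he : ∀ k : Fin 4, (e k : V) = (f k : V) := fun k => rfl
  have nbu : ¬S.Adj b u := fun h => nub h.symm
  have nvu : ¬S.Adj v u := fun h => nuv h.symm
  have nva : ¬S.Adj v a := fun h => nav h.symm
  have h3 : ((3 : Fin 4) : ℕ) = 3 := rfl
  fin_cases i <;> fin_cases j <;>
    · simp only [e, Equiv.ofBijective_apply, f, Matrix.cons_val_zero, Matrix.cons_val_one,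
        Matrix.head_cons, Matrix.cons_val_two, Matrix.tail_cons, Matrix.cons_val_three,
        comap_adj, Function.Embedding.coe_subtype, pathGraph_adj]
      simp [h3, hua, hab, hbv, hua.symm, hab.symm, hbv.symm, nub, nuv, nav, S.irrefl,
        nbu, nvu, nva]

theorem stmt8 {V : Type*} [Fintype V] [DecidableEq V] [Nonempty V]
    (S : SimpleGraph V) [DecidableRel S.Adj] (K I : Finset V)
    (hpart : K ∪ I = Finset.univ) (hdisj : Disjoint K I)
    (hK : S.IsClique (K : Set V)) (hI : Sᶜ.IsClique (I : Set V))
    (hbK : K.card = S.cliqueNum) (hbI : I.card = Sᶜ.cliqueNum)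
    (d : ℕ) (hd : ∀ v ∈ I, S.degree v = d) :
    (∃ T : Finset V, IsInducedP4 S T) ∧ d ≠ 0 ∧ d ≠ K.card := by
  classical
  -- I is nonempty
  obtain ⟨x⟩ := ‹Nonempty V›
  have hI_ne : I.Nonempty := by
    rw [← Finset.card_pos, hbI]
    have : ({x} : Finset V).card ≤ Sᶜ.cliqueNum :=
      SimpleGraph.IsClique.card_le_cliqueNum (tc := by simp)
    simpa using lt_of_lt_of_le (by norm_num) this
  have hK_ne : K.Nonempty := by
    rw [← Finset.card_pos, hbK]
    have : ({x} : Finset V).card ≤ S.cliqueNum :=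
      SimpleGraph.IsClique.card_le_cliqueNum (tc := by simp)
    simpa using lt_of_lt_of_le (by norm_num) this
  -- neighborhoods of I-vertices lie in K
  have hnbr : ∀ v ∈ I, S.neighborFinset v ⊆ K := by
    intro v hv w hw
    rw [SimpleGraph.mem_neighborFinset] at hw
    by_contra hwK
    have hwI : w ∈ I := by
      have : w ∈ K ∪ I := hpart ▸ Finset.mem_univ w
      rcases Finset.mem_union.mp this with h | h
      · exact absurd h hwK
      · exact h
    have := hI hv hwI hw.ne
    simp only [compl_adj] at this
    exact this.2 hw
  have hdeg : ∀ v ∈ I, (S.neighborFinset v).card = d := by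
    intro v hv; rw [← hd v hv]; rfl
  -- d ≠ K.card
  have hdK : d ≠ K.card := by
    intro hdk
    obtain ⟨v, hv⟩ := hI_ne
    have hsub := hnbr v hv
    have heq : S.neighborFinset v = K :=
      Finset.eq_of_subset_of_card_le hsub (by rw [hdeg v hv, hdk])
    have hvK : v ∉ K := fun h => (Finset.disjoint_left.mp hdisj h) hv
    have hclique : S.IsClique ((insert v K : Finset V) : Set V) := by
      intro p hp q hq hpq
      simp only [Finset.coe_insert, Set.mem_insert_iff, Finset.mem_coe] at hp hq
      rcases hp with rfl | hp <;> rcases hq with rfl | hq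
      · exact absurd rfl hpq
      · have : q ∈ S.neighborFinset p := heq ▸ hq
        rwa [SimpleGraph.mem_neighborFinset] at this
      · have : p ∈ S.neighborFinset q := heq ▸ hp
        rw [SimpleGraph.mem_neighborFinset] at this
        exact this.symm
      · exact hK hp hq hpq
    have hle : (insert v K).card ≤ S.cliqueNum :=
      SimpleGraph.IsClique.card_le_cliqueNum (tc := hclique)
    rw [Finset.card_insert_of_notMem hvK, hbK] at hle
    omega
  -- helper: if some a ∈ K is nonadjacent to all of I, contradiction
  have hIgrow : ∀ a ∈ K, (∀ v ∈ I, ¬S.Adj a v) → False := by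
    intro a haK hna
    have haI : a ∉ I := fun h => (Finset.disjoint_left.mp hdisj haK) h
    have hclique : Sᶜ.IsClique ((insert a I : Finset V) : Set V) := by
      intro p hp q hq hpq
      simp only [Finset.coe_insert, Set.mem_insert_iff, Finset.mem_coe] at hp hq
      rcases hp with rfl | hp <;> rcases hq with rfl | hq
      · exact absurd rfl hpq
      · exact (compl_adj S p q).mpr ⟨hpq, hna q hq⟩
      · exact (compl_adj S p q).mpr ⟨hpq, fun h => hna p hp h.symm⟩
      · exact hI hp hq hpq
    have hle : (insert a I).card ≤ Sᶜ.cliqueNum :=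
      SimpleGraph.IsClique.card_le_cliqueNum (tc := hclique)
    rw [Finset.card_insert_of_notMem haI, hbI] at hle
    omega
  -- d ≠ 0
  have hd0 : d ≠ 0 := by
    intro hd0
    obtain ⟨a, haK⟩ := hK_ne
    refine hIgrow a haK fun v hv hadj => ?_
    have : a ∈ S.neighborFinset v := by
      rw [SimpleGraph.mem_neighborFinset]; exact hadj.symm
    have := Finset.card_pos.mpr ⟨a, this⟩
    rw [hdeg v hv, hd0] at this
    exact absurd this (lt_irrefl 0)
  refine ⟨?_, hd0, hdK⟩
  -- find an induced P4
  by_cases hsame : ∀ u ∈ I, ∀ v ∈ I, S.neighborFinset u = S.neighborFinset v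
  · -- all I-vertices have the same neighborhood N ⊊ K; contradiction
    exfalso
    obtain ⟨u0, hu0⟩ := hI_ne
    have hlt : (S.neighborFinset u0).card < K.card := by
      rw [hdeg u0 hu0]
      exact lt_of_le_of_ne (by rw [← hdeg u0 hu0]; exact Finset.card_le_card (hnbr u0 hu0)) hdK
    have hnsub : ¬K ⊆ S.neighborFinset u0 :=
      fun h => absurd (Finset.card_le_card h) (not_le.mpr hlt)
    obtain ⟨a, haK, haN⟩ := Finset.not_subset.mp hnsub
    refine hIgrow a haK fun v hv hadj => ?_
    have : a ∈ S.neighborFinset u0 := by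
      rw [hsame u0 hu0 v hv, SimpleGraph.mem_neighborFinset]
      exact hadj.symm
    exact haN this
  · push_neg at hsame
    obtain ⟨u, hu, v, hv, hne⟩ := hsame
    -- neighborhoods have equal card d, so neither contains the other
    have hcu := hdeg u hu
    have hcv := hdeg v hv
    have hns : ¬S.neighborFinset u ⊆ S.neighborFinset v := by
      intro hsub
      exact hne (Finset.eq_of_subset_of_card_le hsub (by omega))
    have hns' : ¬S.neighborFinset v ⊆ S.neighborFinset u := by
      intro hsub
      exact hne (Finset.eq_of_subset_of_card_le hsub (by omega)).symm
    obtain ⟨a, hau, hav⟩ := Finset.not_subset.mp hns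
    obtain ⟨b, hbv, hbu⟩ := Finset.not_subset.mp hns'
    rw [SimpleGraph.mem_neighborFinset] at hau hbv
    have hauK : a ∈ K := hnbr u hu (by rw [SimpleGraph.mem_neighborFinset]; exact hau)
    have hbvK : b ∈ K := hnbr v hv (by rw [SimpleGraph.mem_neighborFinset]; exact hbv)
    have hab : a ≠ b := by
      rintro rfl
      exact hav (by rwa [SimpleGraph.mem_neighborFinset])
    have huv : u ≠ v := fun h => hne (h ▸ rfl)
    have huK : u ∉ K := fun h => (Finset.disjoint_left.mp hdisj h) hu
    have hvK : v ∉ K := fun h => (Finset.disjoint_left.mp hdisj h) hv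
    have hadjab : S.Adj a b := hK hauK hbvK hab
    have nuv : ¬S.Adj u v := by
      have := hI hu hv huv
      simp only [compl_adj] at this
      exact this.2
    have nub : ¬S.Adj u b := fun h => hbu (by rwa [SimpleGraph.mem_neighborFinset])
    have nav : ¬S.Adj a v := fun h =>
      hav (by rw [SimpleGraph.mem_neighborFinset]; exact h.symm)
    exact ⟨{u, a, b, v}, isInducedP4_of_path S u a b v hau hadjab hbv.symm nub nuv nav
      huv (fun h => huK (h ▸ hbvK)) (fun h => hvK (h ▸ hauK))⟩
end

section
/- Let (S,K,I) be a homogeneous split graph. Then for any three distinct vertices a,b,c ∈ I, if σ_{ab}(S) ≥ 1 then σ_{ac}(S) ≥ 1 or σ_{bc}(S) ≥ 1. In other words, the factor graph Φ(S) contains no induced subgraph isomorphic to the disjoint union K2 ∪ K1 of an edge and an isolated vertex. -/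
open SimpleGraph

lemma pg4_distinguish : ∀ u v : Fin 4, u ≠ v → ¬ (pathGraph 4).Adj u v →
    ∃ k : Fin 4, ((pathGraph 4).Adj u k ∧ ¬ (pathGraph 4).Adj v k) ∨
      ((pathGraph 4).Adj v k ∧ ¬ (pathGraph 4).Adj u k) := by
  simp only [pathGraph_adj]
  decide

lemma extract_distinguisher {V : Type*} (S : SimpleGraph V) (T : Finset V)
    (hP : IsInducedP4 S T) (a b : V) (ha : a ∈ T) (hb : b ∈ T)
    (hab : a ≠ b) (hnadj : ¬S.Adj a b) :
    ∃ t : V, (S.Adj a t ∧ ¬S.Adj b t) ∨ (S.Adj b t ∧ ¬S.Adj a t) := by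
  obtain ⟨-, ⟨e⟩⟩ := hP
  set A : (T : Set V) := ⟨a, ha⟩
  set B : (T : Set V) := ⟨b, hb⟩
  have hAB : e A ≠ e B := by
    simp [A, B, Subtype.ext_iff, hab]
  have hnadj' : ¬(pathGraph 4).Adj (e A) (e B) := by
    rw [e.map_rel_iff]
    exact hnadj
  obtain ⟨k, hk⟩ := pg4_distinguish (e A) (e B) hAB hnadj'
  refine ⟨(e.symm k : V), ?_⟩
  have h1 : S.Adj a (e.symm k : V) ↔ (pathGraph 4).Adj (e A) k := by
    have := e.map_rel_iff (a := A) (b := e.symm k)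
    simpa using this.symm
  have h2 : S.Adj b (e.symm k : V) ↔ (pathGraph 4).Adj (e B) k := by
    have := e.map_rel_iff (a := B) (b := e.symm k)
    simpa using this.symm
  rcases hk with ⟨hk1, hk2⟩ | ⟨hk1, hk2⟩
  · exact Or.inl ⟨h1.mpr hk1, fun h => hk2 (h2.mp h)⟩
  · exact Or.inr ⟨h2.mpr hk1, fun h => hk2 (h1.mp h)⟩

lemma isInducedP4_of {V : Type*} [DecidableEq V] (S : SimpleGraph V) (u y z v : V)
    (huv : u ≠ v)
    (h1 : S.Adj u y) (h2 : S.Adj y z) (h3 : S.Adj z v)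
    (n1 : ¬S.Adj u z) (n2 : ¬S.Adj y v) (n3 : ¬S.Adj u v) :
    IsInducedP4 S {u, y, z, v} := by
  have huy : u ≠ y := h1.ne
  have hyz : y ≠ z := h2.ne
  have hzv : z ≠ v := h3.ne
  have huz : u ≠ z := by rintro rfl; exact n3 h3
  have hyv : y ≠ v := by rintro rfl; exact n3 h1
  set T : Finset V := {u, y, z, v} with hT
  have hu : u ∈ T := by simp [hT]
  have hy : y ∈ T := by simp [hT]
  have hz : z ∈ T := by simp [hT]
  have hv : v ∈ T := by simp [hT]
  have hcard : T.card = 4 := by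
    rw [hT]
    rw [Finset.card_insert_of_notMem (by simp [huy, huz, huv]),
        Finset.card_insert_of_notMem (by simp [hyz, hyv]),
        Finset.card_insert_of_notMem (by simp [hzv]), Finset.card_singleton]
  refine ⟨hcard, ?_⟩
  have n1' : ¬S.Adj z u := fun h => n1 h.symm
  have n2' : ¬S.Adj v y := fun h => n2 h.symm
  have n3' : ¬S.Adj v u := fun h => n3 h.symm
  let f : Fin 4 → (T : Set V) := ![⟨u, hu⟩, ⟨y, hy⟩, ⟨z, hz⟩, ⟨v, hv⟩]
  have hinj : Function.Injective f := by
    intro i j hij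
    fin_cases i <;> fin_cases j <;>
      simp_all [f, huy, huz, huv, hyz, hyv, hzv, Subtype.ext_iff]
  have hbij : Function.Bijective f := by
    refine (Fintype.bijective_iff_injective_and_card f).2 ⟨hinj, ?_⟩
    simp [hcard]
  let e : Fin 4 ≃ (T : Set V) := Equiv.ofBijective f hbij
  have hrel : ∀ i j : Fin 4, (S.induce (T : Set V)).Adj (e i) (e j) ↔ (pathGraph 4).Adj i j := by
    intro i j
    show S.Adj (f i : V) (f j : V) ↔ _
    fin_cases i <;> fin_cases j <;>
      simp [f, pathGraph_adj, h1, h2, h3, h1.symm, h2.symm, h3.symm, n1, n2, n3, n1', n2', n3'] <;>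
      decide
  exact ⟨RelIso.symm ⟨e, hrel _ _⟩⟩

theorem stmt9 {V : Type*} [Fintype V] [DecidableEq V] [Nonempty V]
    (S : SimpleGraph V) [DecidableRel S.Adj] (K I : Finset V)
    (hpart : K ∪ I = Finset.univ) (hdisj : Disjoint K I)
    (hK : S.IsClique (K : Set V)) (hI : Sᶜ.IsClique (I : Set V))
    (hbK : K.card = S.cliqueNum) (hbI : I.card = Sᶜ.cliqueNum)
    (d : ℕ) (hd : ∀ v ∈ I, S.degree v = d)
    (a b c : V) (ha : a ∈ I) (hb : b ∈ I) (hc : c ∈ I)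
    (hab : a ≠ b) (hac : a ≠ c) (hbc : b ≠ c)
    (hsab : 1 ≤ sigmaP4 S a b) :
    1 ≤ sigmaP4 S a c ∨ 1 ≤ sigmaP4 S b c := by
  -- vertices of I are pairwise non-adjacent
  have hInadj : ∀ u ∈ I, ∀ v ∈ I, u ≠ v → ¬S.Adj u v := by
    intro u hu v hv huv
    exact (compl_adj S u v).mp (hI hu hv huv) |>.2
  -- neighbors of an I-vertex lie in K
  have hNK : ∀ u ∈ I, ∀ w, S.Adj u w → w ∈ K := by
    intro u hu w hw
    by_contra hwK
    have hwI : w ∈ I := by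
      have : w ∈ K ∪ I := hpart ▸ Finset.mem_univ w
      simpa [hwK] using Finset.mem_union.mp this
    exact hInadj u hu w hwI hw.ne hw
  -- key equivalence
  have key : ∀ u ∈ I, ∀ v ∈ I, u ≠ v →
      (1 ≤ sigmaP4 S u v ↔ S.neighborFinset u ≠ S.neighborFinset v) := by
    intro u hu v hv huv
    constructor
    · intro hs
      have hne : Nonempty {T : Finset V // IsInducedP4 S T ∧ u ∈ T ∧ v ∈ T} := by
        rcases Nat.card_pos_iff.mp hs with ⟨h, -⟩
        exact h
      obtain ⟨⟨T, hP, huT, hvT⟩⟩ := hne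
      obtain ⟨t, ⟨h1, h2⟩ | ⟨h1, h2⟩⟩ :=
        extract_distinguisher S T hP u v huT hvT huv (hInadj u hu v hv huv)
      · intro heq
        exact h2 ((S.mem_neighborFinset v t).mp (heq ▸ (S.mem_neighborFinset u t).mpr h1))
      · intro heq
        exact h2 ((S.mem_neighborFinset u t).mp (heq ▸ (S.mem_neighborFinset v t).mpr h1))
    · intro hne
      have hcards : (S.neighborFinset u).card = (S.neighborFinset v).card := by
        rw [S.card_neighborFinset_eq_degree, S.card_neighborFinset_eq_degree, hd u hu, hd v hv]
      have hsub1 : ¬S.neighborFinset u ⊆ S.neighborFinset v := fun h =>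
        hne (Finset.eq_of_subset_of_card_le h (le_of_eq hcards.symm))
      have hsub2 : ¬S.neighborFinset v ⊆ S.neighborFinset u := fun h =>
        hne (Finset.eq_of_subset_of_card_le h (le_of_eq hcards)).symm
      obtain ⟨y, hy1, hy2⟩ := Finset.not_subset.mp hsub1
      obtain ⟨z, hz1, hz2⟩ := Finset.not_subset.mp hsub2
      rw [S.mem_neighborFinset] at hy1 hz1
      rw [S.mem_neighborFinset] at hy2 hz2
      have hyK : y ∈ K := hNK u hu y hy1
      have hzK : z ∈ K := hNK v hv z hz1
      have hyz : y ≠ z := by rintro rfl; exact hy2 hz1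
      have hadjyz : S.Adj y z := hK hyK hzK hyz
      have hP4 : IsInducedP4 S {u, y, z, v} :=
        isInducedP4_of S u y z v huv hy1 hadjyz hz1.symm
          hz2 (fun h => hy2 h.symm) (hInadj u hu v hv huv)
      have : Nonempty {T : Finset V // IsInducedP4 S T ∧ u ∈ T ∧ v ∈ T} :=
        ⟨⟨{u, y, z, v}, hP4, by simp, by simp⟩⟩
      exact Nat.card_pos_iff.mpr ⟨this, inferInstance⟩
  by_contra h
  push_neg at h
  obtain ⟨h1, h2⟩ := h
  have e1 : S.neighborFinset a = S.neighborFinset c := by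
    by_contra hne; exact absurd ((key a ha c hc hac).mpr hne) (by omega)
  have e2 : S.neighborFinset b = S.neighborFinset c := by
    by_contra hne; exact absurd ((key b hb c hc hbc).mpr hne) (by omega)
  exact absurd (e1.trans e2.symm) ((key a ha b hb hab).mp hsab)
end

section
/- Let (S,K,I) be a homogeneous split graph with |I| ≥ 2. Then the underlying simple factor graph Φ'(S) — the simple graph on vertex set I where u is adjacent to v if and only if σ_{uv}(S) ≥ 1 — is connected and has diameter at most 2. -/
open SimpleGraph

/-- The underlying simple factor graph `Φ'(S)` on vertex set `I`:
`u` is adjacent to `v` iff `σ_{uv}(S) ≥ 1`. -/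
noncomputable def phiGe {V : Type*} (S : SimpleGraph V) (I : Finset V) :
    SimpleGraph {x // x ∈ I} :=
  SimpleGraph.fromRel (fun u v => 1 ≤ sigmaP4 S u.1 v.1)

lemma isInducedP4_of_s10 {V : Type*} [DecidableEq V] (S : SimpleGraph V) (a b c d : V)
    (hab : S.Adj a b) (hbc : S.Adj b c) (hcd : S.Adj c d)
    (hac : ¬S.Adj a c) (had : ¬S.Adj a d) (hbd : ¬S.Adj b d) :
    IsInducedP4 S {a, b, c, d} := by
  have hab' : a ≠ b := hab.ne
  have hbc' : b ≠ c := hbc.ne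
  have hcd' : c ≠ d := hcd.ne
  have hac' : a ≠ c := fun h => had (h ▸ hcd)
  have had' : a ≠ d := fun h => hbd (h ▸ hab.symm)
  have hbd' : b ≠ d := fun h => had (h ▸ hab)
  constructor
  · simp [Finset.card_insert_of_notMem, hab', hac', had', hbc', hbd', hcd']
  · have ha : a ∈ (({a,b,c,d} : Finset V) : Set V) := by simp
    have hb : b ∈ (({a,b,c,d} : Finset V) : Set V) := by simp
    have hc : c ∈ (({a,b,c,d} : Finset V) : Set V) := by simp
    have hdm : d ∈ (({a,b,c,d} : Finset V) : Set V) := by simp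
    let g : Fin 4 → (({a,b,c,d} : Finset V) : Set V) := ![⟨a, ha⟩, ⟨b, hb⟩, ⟨c, hc⟩, ⟨d, hdm⟩]
    have hginj : Function.Injective g := by
      intro i j hij
      fin_cases i <;> fin_cases j <;> simp_all [g, Subtype.ext_iff]
    have hgsurj : Function.Surjective g := by
      rintro ⟨z, hz⟩
      simp only [Finset.coe_insert, Set.mem_insert_iff, Finset.coe_singleton,
        Set.mem_singleton_iff] at hz
      rcases hz with rfl | rfl | rfl | rfl
      · exact ⟨0, rfl⟩
      · exact ⟨1, rfl⟩
      · exact ⟨2, rfl⟩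
      · exact ⟨3, rfl⟩
    have hba : S.Adj b a := hab.symm
    have hcb : S.Adj c b := hbc.symm
    have hdc : S.Adj d c := hcd.symm
    have hca : ¬S.Adj c a := fun h => hac h.symm
    have hda : ¬S.Adj d a := fun h => had h.symm
    have hdb : ¬S.Adj d b := fun h => hbd h.symm
    refine ⟨RelIso.symm ⟨Equiv.ofBijective g ⟨hginj, hgsurj⟩, @fun i j => ?_⟩⟩
    show (S.induce _).Adj (g i) (g j) ↔ (pathGraph 4).Adj i j
    fin_cases i <;> fin_cases j <;>
      first
      | exact iff_of_false (S.irrefl) (by rw [pathGraph_adj]; decide)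
      | exact iff_of_true hab (by rw [pathGraph_adj]; decide)
      | exact iff_of_true hbc (by rw [pathGraph_adj]; decide)
      | exact iff_of_true hcd (by rw [pathGraph_adj]; decide)
      | exact iff_of_true hba (by rw [pathGraph_adj]; decide)
      | exact iff_of_true hcb (by rw [pathGraph_adj]; decide)
      | exact iff_of_true hdc (by rw [pathGraph_adj]; decide)
      | exact iff_of_false hac (by rw [pathGraph_adj]; decide)
      | exact iff_of_false had (by rw [pathGraph_adj]; decide)
      | exact iff_of_false hbd (by rw [pathGraph_adj]; decide)
      | exact iff_of_false hca (by rw [pathGraph_adj]; decide)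
      | exact iff_of_false hda (by rw [pathGraph_adj]; decide)
      | exact iff_of_false hdb (by rw [pathGraph_adj]; decide)

theorem stmt10 {V : Type*} [Fintype V] [DecidableEq V] [Nonempty V]
    (S : SimpleGraph V) [DecidableRel S.Adj] (K I : Finset V)
    (hpart : K ∪ I = Finset.univ) (hdisj : Disjoint K I)
    (hK : S.IsClique (K : Set V)) (hI : Sᶜ.IsClique (I : Set V))
    (hbK : K.card = S.cliqueNum) (hbI : I.card = Sᶜ.cliqueNum)
    (d : ℕ) (hd : ∀ v ∈ I, S.degree v = d)
    (hI2 : 2 ≤ I.card) :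
    (phiGe S I).Connected ∧ ∀ u v : {x // x ∈ I}, (phiGe S I).dist u v ≤ 2 := by
  -- vertices of I are pairwise non-adjacent
  have hInd : ∀ a ∈ I, ∀ b ∈ I, ¬S.Adj a b := by
    intro a ha b hb hadj
    rcases eq_or_ne a b with rfl | hne
    · exact S.irrefl hadj
    · exact ((hI (by exact_mod_cast ha) (by exact_mod_cast hb) hne).2 : ¬S.Adj a b) hadj
  -- a neighbor of a vertex of I lies in K
  have hNbrK : ∀ a ∈ I, ∀ x, S.Adj a x → x ∈ K := by
    intro a ha x hax
    rcases Finset.mem_union.mp (hpart ▸ Finset.mem_univ x) with hx | hx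
    · exact hx
    · exact absurd hax (hInd a ha x hx)
  -- adjacency in phiGe from distinct neighborhoods
  have hadj : ∀ u ∈ I, ∀ v ∈ I, u ≠ v → S.neighborFinset u ≠ S.neighborFinset v →
      1 ≤ sigmaP4 S u v := by
    intro u hu v hv huv hN
    have hcard : (S.neighborFinset u).card = (S.neighborFinset v).card := by
      rw [S.card_neighborFinset_eq_degree, S.card_neighborFinset_eq_degree, hd u hu, hd v hv]
    have h1 : (S.neighborFinset u \ S.neighborFinset v).Nonempty := by
      rw [Finset.sdiff_nonempty]
      intro hsub
      exact hN (Finset.eq_of_subset_of_card_le hsub hcard.ge)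
    have h2 : (S.neighborFinset v \ S.neighborFinset u).Nonempty := by
      rw [Finset.sdiff_nonempty]
      intro hsub
      exact hN (Finset.eq_of_subset_of_card_le hsub hcard.le).symm
    obtain ⟨x, hx⟩ := h1
    obtain ⟨y, hy⟩ := h2
    rw [Finset.mem_sdiff, mem_neighborFinset, mem_neighborFinset] at hx hy
    obtain ⟨hux, hvx⟩ := hx
    obtain ⟨hvy, huy⟩ := hy
    have hxK : x ∈ K := hNbrK u hu x hux
    have hyK : y ∈ K := hNbrK v hv y hvy
    have hxy : x ≠ y := by rintro rfl; exact huy hux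
    have hxyadj : S.Adj x y := hK (by exact_mod_cast hxK) (by exact_mod_cast hyK) hxy
    have hP4 : IsInducedP4 S {u, x, y, v} :=
      isInducedP4_of_s10 S u x y v hux hxyadj hvy.symm huy (hInd u hu v hv)
        (fun h => hvx h.symm)
    have : Nonempty {T : Finset V // IsInducedP4 S T ∧ u ∈ T ∧ v ∈ T} :=
      ⟨⟨{u, x, y, v}, hP4, by simp, by simp⟩⟩
    exact Nat.one_le_iff_ne_zero.mpr (Nat.card_ne_zero.mpr ⟨this, inferInstance⟩)
  -- every vertex of I has a non-neighbor in K
  have hnonnbr : ∀ u ∈ I, ∃ k ∈ K, ¬S.Adj u k := by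
    intro u hu
    by_contra h
    push_neg at h
    have huK : u ∉ K := Finset.disjoint_right.mp hdisj hu
    have hclique : S.IsClique ((insert u K : Finset V) : Set V) := by
      rw [Finset.coe_insert]
      refine hK.insert ?_
      intro b hb hne
      exact h b (by exact_mod_cast hb)
    have hle : (insert u K).card ≤ S.cliqueNum :=
      SimpleGraph.IsClique.card_le_cliqueNum (tc := hclique)
    rw [Finset.card_insert_of_notMem huK, hbK] at hle
    omega
  -- there is always a vertex of I with a different neighborhood
  have hdiff : ∀ u ∈ I, ∃ w ∈ I, S.neighborFinset w ≠ S.neighborFinset u := by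
    intro u hu
    by_contra h
    push_neg at h
    obtain ⟨k, hkK, hk⟩ := hnonnbr u hu
    have hkI : k ∉ I := Finset.disjoint_left.mp hdisj hkK
    have hclique : Sᶜ.IsClique ((insert k I : Finset V) : Set V) := by
      rw [Finset.coe_insert]
      refine hI.insert ?_
      intro b hb hne
      have hbI : b ∈ I := by exact_mod_cast hb
      have : ¬S.Adj b k := by
        intro hadj'
        have : k ∈ S.neighborFinset b := (mem_neighborFinset _ _ _).mpr hadj'
        rw [h b hbI] at this
        exact hk ((mem_neighborFinset _ _ _).mp this)
      exact (SimpleGraph.compl_adj S k b).mpr ⟨hne, fun hadj' => this hadj'.symm⟩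
    have hle : (insert k I).card ≤ Sᶜ.cliqueNum :=
      SimpleGraph.IsClique.card_le_cliqueNum (tc := hclique)
    rw [Finset.card_insert_of_notMem hkI, hbI] at hle
    omega
  -- phiGe adjacency
  have hPhiAdj : ∀ (u v : {x // x ∈ I}), u.1 ≠ v.1 →
      S.neighborFinset u.1 ≠ S.neighborFinset v.1 → (phiGe S I).Adj u v := by
    intro u v hne hN
    rw [phiGe, fromRel_adj]
    exact ⟨fun h => hne (congrArg Subtype.val h),
      Or.inl (hadj u.1 u.2 v.1 v.2 hne hN)⟩
  -- the key reachability fact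
  have hwalk : ∀ u v : {x // x ∈ I}, ∃ p : (phiGe S I).Walk u v, p.length ≤ 2 := by
    intro u v
    rcases eq_or_ne u v with rfl | hne
    · exact ⟨Walk.nil, by simp⟩
    have hne' : u.1 ≠ v.1 := fun h => hne (Subtype.ext h)
    rcases eq_or_ne (S.neighborFinset u.1) (S.neighborFinset v.1) with hNeq | hNne
    · obtain ⟨w, hwI, hwN⟩ := hdiff u.1 u.2
      have hwu : w ≠ u.1 := fun h => hwN (by rw [h])
      have hwv : w ≠ v.1 := fun h => hwN (by rw [h, ← hNeq])
      have h1 : (phiGe S I).Adj u ⟨w, hwI⟩ := hPhiAdj u ⟨w, hwI⟩ hwu.symm (Ne.symm hwN)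
      have h2 : (phiGe S I).Adj ⟨w, hwI⟩ v := hPhiAdj ⟨w, hwI⟩ v hwv (hNeq ▸ hwN)
      exact ⟨Walk.cons h1 (Walk.cons h2 Walk.nil), by simp⟩
    · exact ⟨Walk.cons (hPhiAdj u v hne' hNne) Walk.nil, by simp⟩
  have hpre : (phiGe S I).Preconnected := fun u v => (hwalk u v).elim fun p _ => ⟨p⟩
  have hne : Nonempty {x // x ∈ I} := by
    obtain ⟨x, hx⟩ := Finset.card_pos.mp (show 0 < I.card by omega)
    exact ⟨⟨x, hx⟩⟩
  refine ⟨⟨hpre⟩, fun u v => ?_⟩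
  obtain ⟨p, hp⟩ := hwalk u v
  exact le_trans (SimpleGraph.dist_le p) hp
end

section
/- Let (S,K,I) be a balanced split graph with |I| ≥ 2 such that σ_{uv}(S) ≥ 1 for all distinct u,v ∈ I (i.e., the factor graph Φ(S) is complete). If x is a vertex of S that belongs to no induced P4 of S (an inactive vertex), then x is universal, i.e., x is adjacent to every other vertex of S. -/
/-!
An inactive vertex `x` cannot lie in `I`: any second vertex of `I` shares an induced `P4` with it.
So `x ∈ K` and it is adjacent to all of `K`. Suppose `x` misses some `w ∈ I`. Since `I` is a
maximum independent set, `x` has a neighbour `u ∈ I`, and some induced `P4` contains `u` and `w`.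
In a split graph the inner vertices of an induced `P4` lie in `K`, so `u` and `w` are its two ends
and the inner neighbour `c` of `w` is not adjacent to `u`. Then `u - x - c - w` is an induced `P4`
through `x`, a contradiction.
-/

open SimpleGraph

section

variable {V : Type*} {S : SimpleGraph V}

theorem isInducedP4_of_path_s12 [DecidableEq V] {a b c d : V} (hac : a ≠ c) (had : a ≠ d)
    (hbd : b ≠ d) (hab : S.Adj a b) (hbc : S.Adj b c) (hcd : S.Adj c d)
    (nac : ¬S.Adj a c) (nad : ¬S.Adj a d) (nbd : ¬S.Adj b d) :
    IsInducedP4 S {a, b, c, d} := by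
  have hinj : Function.Injective ![a, b, c, d] := by
    intro i j h
    fin_cases i <;> fin_cases j <;>
      simp_all [hab.ne, hbc.ne, hcd.ne, hab.ne.symm, hbc.ne.symm, hcd.ne.symm, eq_comm]
  have hadj (i j : Fin 4) :
      S.Adj (![a, b, c, d] i) (![a, b, c, d] j) ↔ (pathGraph 4).Adj i j := by
    fin_cases i <;> fin_cases j <;> simp [pathGraph_adj, *, adj_comm]
  let f : pathGraph 4 ↪g S := ⟨⟨_, hinj⟩, hadj _ _⟩
  have hrange : Set.range f = ({a, b, c, d} : Finset V) := by
    ext v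
    simp only [f, Set.mem_range, Fin.exists_fin_succ, Fin.exists_fin_zero]
    simp [eq_comm]
  exact ⟨Finset.card_eq_four.mpr ⟨a, b, c, d, hab.ne, hac, had, hbc.ne, hbd, hcd.ne, rfl⟩,
    ⟨(hrange ▸ f.isoInduceRange).symm⟩⟩

theorem IsInducedP4.exists_path [DecidableEq V] {T : Finset V} (hT : IsInducedP4 S T) :
    ∃ a b c d, T = {a, b, c, d} ∧ a ≠ c ∧ a ≠ d ∧ b ≠ d ∧
      S.Adj a b ∧ S.Adj b c ∧ S.Adj c d ∧ ¬S.Adj a c ∧ ¬S.Adj a d ∧ ¬S.Adj b d := by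
  obtain ⟨-, ⟨e⟩⟩ := hT
  let f : pathGraph 4 ↪g S := (Embedding.induce (T : Set V)).comp e.symm.toEmbedding
  have hadj (i j : Fin 4) : S.Adj (f i) (f j) ↔ i.val + 1 = j.val ∨ j.val + 1 = i.val :=
    f.map_adj_iff.trans pathGraph_adj
  have hne {i j : Fin 4} (h : i ≠ j) : f i ≠ f j := f.injective.ne h
  refine ⟨f 0, f 1, f 2, f 3, ?_, hne (by decide), hne (by decide), hne (by decide),
    (hadj 0 1).2 (by decide), (hadj 1 2).2 (by decide), (hadj 2 3).2 (by decide),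
    mt (hadj 0 2).1 (by decide), mt (hadj 0 3).1 (by decide), mt (hadj 1 3).1 (by decide)⟩
  ext t
  constructor
  · intro ht
    have : f (e ⟨t, ht⟩) = t := congrArg Subtype.val (e.symm_apply_apply ⟨t, ht⟩)
    rw [← this]
    generalize e ⟨t, ht⟩ = i
    fin_cases i <;> simp [f]
  · intro ht
    simp only [Finset.mem_insert, Finset.mem_singleton] at ht
    rcases ht with rfl | rfl | rfl | rfl <;> exact (e.symm _).2

theorem exists_isInducedP4_of_sigmaP4_pos {u v : V} (h : 0 < sigmaP4 S u v) :
    ∃ T, IsInducedP4 S T ∧ u ∈ T ∧ v ∈ T :=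
  let ⟨⟨T, hT⟩⟩ := (Nat.card_pos_iff.1 h).1
  ⟨T, hT⟩

theorem IsIndepSet.not_adj {I : Set V} (hI : S.IsIndepSet I) {u v : V} (hu : u ∈ I)
    (hv : v ∈ I) : ¬S.Adj u v :=
  fun h => hI hu hv h.ne h

theorem IsIndepSet.exists_adj_of_card_eq_indepNum [Finite V] [DecidableEq V] {I : Finset V}
    (hI : S.IsIndepSet (I : Set V)) (hmax : I.card = S.indepNum) {x : V} (hx : x ∉ I) :
    ∃ u ∈ I, S.Adj x u := by
  by_contra! hno
  have hins : S.IsIndepSet (insert x I : Finset V) := by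
    rw [Finset.coe_insert, IsIndepSet, Set.pairwise_insert]
    exact ⟨hI, fun u hu _ => ⟨hno u hu, fun h => hno u hu h.symm⟩⟩
  have := hins.card_le_indepNum
  rw [Finset.card_insert_of_notMem hx] at this
  omega

namespace SplitGraph

variable {K I : Set V} (hK : S.IsClique K) (hI : S.IsIndepSet I) (hKI : ∀ v, v ∈ K ∨ v ∈ I)
include hK hI hKI

theorem mem_clique_of_adj_of_adj {a b c : V} (hac : a ≠ c) (hab : S.Adj a b) (hbc : S.Adj b c)
    (nac : ¬S.Adj a c) : b ∈ K := by
  refine (hKI b).resolve_right fun hbI => nac (hK ?_ ?_ hac)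
  · exact (hKI a).resolve_right fun haI => IsIndepSet.not_adj hI haI hbI hab
  · exact (hKI c).resolve_right fun hcI => IsIndepSet.not_adj hI hbI hcI hbc

theorem exists_adj_not_adj_of_isInducedP4 [DecidableEq V] (hdisj : Disjoint K I) {T : Finset V}
    (hT : IsInducedP4 S T) {u w : V} (huT : u ∈ T) (hwT : w ∈ T) (huI : u ∈ I) (hwI : w ∈ I)
    (huw : u ≠ w) : ∃ c ∈ K, S.Adj c w ∧ ¬S.Adj c u := by
  obtain ⟨a, b, c, d, rfl, hac, -, hbd, hab, hbc, hcd, nac, -, nbd⟩ := hT.exists_path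
  have hbK : b ∈ K := mem_clique_of_adj_of_adj hK hI hKI hac hab hbc nac
  have hcK : c ∈ K := mem_clique_of_adj_of_adj hK hI hKI hbd hbc hcd nbd
  have hend {v : V} (hvT : v ∈ ({a, b, c, d} : Finset V)) (hvI : v ∈ I) : v = a ∨ v = d := by
    simp only [Finset.mem_insert, Finset.mem_singleton] at hvT
    rcases hvT with h | rfl | rfl | h
    exacts [.inl h, (hdisj.notMem_of_mem_left hbK hvI).elim,
      (hdisj.notMem_of_mem_left hcK hvI).elim, .inr h]
  rcases hend huT huI with rfl | rfl <;> rcases hend hwT hwI with rfl | rfl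
  · exact absurd rfl huw
  · exact ⟨c, hcK, hcd, fun h => nac h.symm⟩
  · exact ⟨b, hbK, hab.symm, nbd⟩
  · exact absurd rfl huw

theorem exists_isInducedP4_mem_of_adj_of_not_adj [DecidableEq V] (hdisj : Disjoint K I)
    {x u w : V} (hxK : x ∈ K) (huI : u ∈ I) (hwI : w ∈ I) (hxu : S.Adj x u) (hxw : ¬S.Adj x w)
    {T : Finset V} (hT : IsInducedP4 S T) (huT : u ∈ T) (hwT : w ∈ T) :
    ∃ T', IsInducedP4 S T' ∧ x ∈ T' := by
  have huw : u ≠ w := by rintro rfl; exact hxw hxu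
  obtain ⟨c, hcK, hcw, hcu⟩ :=
    exists_adj_not_adj_of_isInducedP4 hK hI hKI hdisj hT huT hwT huI hwI huw
  have hxc : x ≠ c := by rintro rfl; exact hxw hcw
  have hP4 : IsInducedP4 S {u, x, c, w} :=
    isInducedP4_of_path_s12 (hdisj.ne_of_mem hcK huI).symm huw
      (hdisj.ne_of_mem hxK hwI) hxu.symm (hK hxK hcK hxc) hcw (fun h => hcu h.symm)
      (IsIndepSet.not_adj hI huI hwI) hxw
  exact ⟨_, hP4, by simp⟩

end SplitGraph

end

theorem stmt12_general {V : Type*} [Fintype V] [DecidableEq V]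
    (S : SimpleGraph V) (K I : Finset V)
    (hpart : K ∪ I = Finset.univ) (hdisj : Disjoint K I)
    (hK : S.IsClique (K : Set V)) (hI : Sᶜ.IsClique (I : Set V))
    (hbI : I.card = Sᶜ.cliqueNum)
    (hI2 : 2 ≤ I.card)
    (hcomp : ∀ u ∈ I, ∀ v ∈ I, u ≠ v → 1 ≤ sigmaP4 S u v)
    (x : V) (hx : ¬ ∃ T : Finset V, IsInducedP4 S T ∧ x ∈ T) :
    ∀ w : V, w ≠ x → S.Adj x w := by
  have hKI (v : V) : v ∈ (K : Set V) ∨ v ∈ (I : Set V) :=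
    Finset.mem_union.1 (hpart ▸ Finset.mem_univ v)
  have hIndep : S.IsIndepSet (I : Set V) := (isClique_compl S).1 hI
  have hP4 {u v : V} (hu : u ∈ I) (hv : v ∈ I) (huv : u ≠ v) :
      ∃ T, IsInducedP4 S T ∧ u ∈ T ∧ v ∈ T :=
    exists_isInducedP4_of_sigmaP4_pos (hcomp u hu v hv huv)
  have hxK : x ∈ K := by
    refine (hKI x).resolve_right fun hxI => ?_
    obtain ⟨u, hu, hux⟩ := Finset.exists_mem_ne hI2 x
    obtain ⟨T, hT, hxT, -⟩ := hP4 hxI hu hux.symm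
    exact hx ⟨T, hT, hxT⟩
  intro w hwx
  refine (hKI w).elim (fun hwK => hK hxK hwK hwx.symm) fun hwI => ?_
  by_contra hxw
  obtain ⟨u, huI, hxu⟩ := IsIndepSet.exists_adj_of_card_eq_indepNum hIndep
    (hbI.trans cliqueNum_compl) (Finset.disjoint_left.1 hdisj hxK)
  obtain ⟨T, hT, huT, hwT⟩ := hP4 huI hwI (by rintro rfl; exact hxw hxu)
  exact hx (SplitGraph.exists_isInducedP4_mem_of_adj_of_not_adj hK hIndep hKI
    (Finset.disjoint_coe.2 hdisj) hxK huI hwI hxu hxw hT huT hwT)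

theorem stmt12 {V : Type*} [Fintype V] [DecidableEq V] [Nonempty V]
    (S : SimpleGraph V) [DecidableRel S.Adj] (K I : Finset V)
    (hpart : K ∪ I = Finset.univ) (hdisj : Disjoint K I)
    (hK : S.IsClique (K : Set V)) (hI : Sᶜ.IsClique (I : Set V))
    (hbK : K.card = S.cliqueNum) (hbI : I.card = Sᶜ.cliqueNum)
    (hI2 : 2 ≤ I.card)
    (hcomp : ∀ u ∈ I, ∀ v ∈ I, u ≠ v → 1 ≤ sigmaP4 S u v)
    (x : V) (hx : ¬ ∃ T : Finset V, IsInducedP4 S T ∧ x ∈ T) :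
    ∀ w : V, w ≠ x → S.Adj x w :=
  stmt12_general S K I hpart hdisj hK hI hbI hI2 hcomp x hx
end

section
/- Let (S,K,I) be an active split graph, i.e., every vertex of S belongs to some induced P4 of S. Define A4(S) as the simple graph on the vertex set of S where u is adjacent to v (u ≠ v) iff some induced P4 of S contains both u and v, and Φ'(S) as the simple graph on vertex set I where u is adjacent to v iff σ_{uv}(S) ≥ 1. Then Φ'(S) is connected if and only if A4(S) is connected. -/
open SimpleGraph

/-- The Barrus--West graph `A₄(S)`: two distinct vertices are adjacent iff some
induced `P4` of `S` contains both. -/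
def a4Graph {V : Type*} (S : SimpleGraph V) : SimpleGraph V :=
  SimpleGraph.fromRel (fun u v => ∃ T : Finset V, IsInducedP4 S T ∧ u ∈ T ∧ v ∈ T)

def P4c {V : Type*} (S : SimpleGraph V) (a b c d : V) : Prop :=
  a ≠ b ∧ a ≠ c ∧ a ≠ d ∧ b ≠ c ∧ b ≠ d ∧ c ≠ d ∧
  S.Adj a b ∧ S.Adj b c ∧ S.Adj c d ∧ ¬S.Adj a c ∧ ¬S.Adj a d ∧ ¬S.Adj b d

lemma p4c_isInducedP4 {V : Type*} [DecidableEq V] {S : SimpleGraph V} {a b c d : V}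
    (h : P4c S a b c d) : IsInducedP4 S {a, b, c, d} := by
  obtain ⟨hab, hac, had, hbc, hbd, hcd, e1, e2, e3, n1, n2, n3⟩ := h
  have hcard : ({a, b, c, d} : Finset V).card = 4 := by
    rw [Finset.card_insert_of_notMem (by simp [hab, hac, had]),
      Finset.card_insert_of_notMem (by simp [hbc, hbd]),
      Finset.card_insert_of_notMem (by simp [hcd]), Finset.card_singleton]
  refine ⟨hcard, ?_⟩
  have ha : a ∈ (({a,b,c,d} : Finset V) : Set V) := by simp
  have hb : b ∈ (({a,b,c,d} : Finset V) : Set V) := by simp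
  have hc : c ∈ (({a,b,c,d} : Finset V) : Set V) := by simp
  have hd : d ∈ (({a,b,c,d} : Finset V) : Set V) := by simp
  let g : Fin 4 → (({a,b,c,d} : Finset V) : Set V) := fun i =>
    if i = 0 then ⟨a, ha⟩ else if i = 1 then ⟨b, hb⟩ else if i = 2 then ⟨c, hc⟩ else ⟨d, hd⟩
  have hinj : Function.Injective g := by
    intro i j hij
    fin_cases i <;> fin_cases j <;> simp_all [g, Subtype.ext_iff, hab, hac, had, hbc, hbd, hcd,
      hab.symm, hac.symm, had.symm, hbc.symm, hbd.symm, hcd.symm]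
  have hsurj : Function.Surjective g := by
    rintro ⟨x, hx⟩
    simp only [Finset.coe_insert, Set.mem_insert_iff, Finset.coe_singleton,
      Set.mem_singleton_iff] at hx
    rcases hx with rfl | rfl | rfl | rfl
    exacts [⟨0, rfl⟩, ⟨1, rfl⟩, ⟨2, rfl⟩, ⟨3, rfl⟩]
  let e := Equiv.ofBijective g ⟨hinj, hsurj⟩
  refine ⟨(RelIso.mk e ?_ : pathGraph 4 ≃g S.induce _).symm⟩
  intro i j
  have hn1 : ¬S.Adj c a := fun h => n1 h.symm
  have hn2 : ¬S.Adj d a := fun h => n2 h.symm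
  have hn3 : ¬S.Adj d b := fun h => n3 h.symm
  have he1 : S.Adj b a := e1.symm
  have he2 : S.Adj c b := e2.symm
  have he3 : S.Adj d c := e3.symm
  have hl : ∀ x : V, ¬S.Adj x x := fun x => S.irrefl
  show (S.induce _).Adj (g i) (g j) ↔ (pathGraph 4).Adj i j
  fin_cases i <;> fin_cases j <;> rw [pathGraph_adj] <;>
    first
      | exact iff_of_true e1 (by decide) | exact iff_of_true e2 (by decide)
      | exact iff_of_true e3 (by decide) | exact iff_of_true he1 (by decide)
      | exact iff_of_true he2 (by decide) | exact iff_of_true he3 (by decide)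
      | exact iff_of_false n1 (by decide) | exact iff_of_false n2 (by decide)
      | exact iff_of_false n3 (by decide) | exact iff_of_false hn1 (by decide)
      | exact iff_of_false hn2 (by decide) | exact iff_of_false hn3 (by decide)
      | exact iff_of_false (hl _) (by decide)

lemma isInducedP4_p4c {V : Type*} [DecidableEq V] {S : SimpleGraph V} {T : Finset V}
    (h : IsInducedP4 S T) : ∃ a b c d, T = {a, b, c, d} ∧ P4c S a b c d := by
  obtain ⟨hcard, ⟨φ⟩⟩ := h
  set f := φ.symm with hf
  refine ⟨(f 0).1, (f 1).1, (f 2).1, (f 3).1, ?_, ?_⟩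
  · have hsub : ({(f 0).1, (f 1).1, (f 2).1, (f 3).1} : Finset V) ⊆ T := by
      intro x hx
      simp only [Finset.mem_insert, Finset.mem_singleton] at hx
      rcases hx with rfl | rfl | rfl | rfl <;> exact (f _).2
    have hne : ∀ i j : Fin 4, i ≠ j → (f i).1 ≠ (f j).1 := by
      intro i j hij hval
      exact hij (f.toEquiv.injective (Subtype.ext hval))
    have hc4 : ({(f 0).1, (f 1).1, (f 2).1, (f 3).1} : Finset V).card = 4 := by
      rw [Finset.card_insert_of_notMem (by
          simp only [Finset.mem_insert, Finset.mem_singleton, not_or]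
          exact ⟨hne 0 1 (by decide), hne 0 2 (by decide), hne 0 3 (by decide)⟩),
        Finset.card_insert_of_notMem (by
          simp only [Finset.mem_insert, Finset.mem_singleton, not_or]
          exact ⟨hne 1 2 (by decide), hne 1 3 (by decide)⟩),
        Finset.card_insert_of_notMem (by
          simp only [Finset.mem_singleton]
          exact hne 2 3 (by decide)), Finset.card_singleton]
    exact (Finset.eq_of_subset_of_card_le hsub (by rw [hcard, hc4])).symm
  · have hadj : ∀ i j : Fin 4, (pathGraph 4).Adj i j ↔ S.Adj (f i).1 (f j).1 := by
      intro i j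
      rw [← φ.symm.map_rel_iff]
      rfl
    have hne : ∀ i j : Fin 4, i ≠ j → (f i).1 ≠ (f j).1 := by
      intro i j hij hval
      exact hij (f.toEquiv.injective (Subtype.ext hval))
    refine ⟨hne 0 1 (by decide), hne 0 2 (by decide), hne 0 3 (by decide),
      hne 1 2 (by decide), hne 1 3 (by decide), hne 2 3 (by decide),
      (hadj 0 1).1 (by rw [pathGraph_adj]; decide),
      (hadj 1 2).1 (by rw [pathGraph_adj]; decide),
      (hadj 2 3).1 (by rw [pathGraph_adj]; decide),
      fun h => ?_, fun h => ?_, fun h => ?_⟩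
    · have := (hadj 0 2).2 h; rw [pathGraph_adj] at this; exact absurd this (by decide)
    · have := (hadj 0 3).2 h; rw [pathGraph_adj] at this; exact absurd this (by decide)
    · have := (hadj 1 3).2 h; rw [pathGraph_adj] at this; exact absurd this (by decide)

section Main

variable {V : Type*} [Fintype V] [DecidableEq V] {S : SimpleGraph V} {K I : Finset V}

lemma p4c_rev {a b c d : V} (h : P4c S a b c d) : P4c S d c b a := by
  obtain ⟨hab, hac, had, hbc, hbd, hcd, e1, e2, e3, n1, n2, n3⟩ := h
  exact ⟨hcd.symm, hbd.symm, had.symm, hbc.symm, hac.symm, hab.symm,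
    e3.symm, e2.symm, e1.symm, fun h => n3 h.symm, fun h => n2 h.symm, fun h => n1 h.symm⟩

lemma sigma_pos_iff {u v : V} :
    1 ≤ sigmaP4 S u v ↔ ∃ T : Finset V, IsInducedP4 S T ∧ u ∈ T ∧ v ∈ T := by
  rw [sigmaP4, Nat.one_le_iff_ne_zero, Nat.card_ne_zero]
  constructor
  · rintro ⟨⟨T, hT⟩, -⟩; exact ⟨T, hT⟩
  · rintro ⟨T, hT⟩; exact ⟨⟨⟨T, hT⟩⟩, inferInstance⟩

lemma memKI (hpart : K ∪ I = Finset.univ) (x : V) : x ∈ K ∨ x ∈ I := by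
  have : x ∈ K ∪ I := by rw [hpart]; exact Finset.mem_univ x
  exact Finset.mem_union.mp this

lemma inonadj (hI : Sᶜ.IsClique (I : Set V)) {x y : V}
    (hx : x ∈ I) (hy : y ∈ I) (hne : x ≠ y) : ¬S.Adj x y :=
  ((S.compl_adj x y).mp (hI hx hy hne)).2

lemma kadj (hK : S.IsClique (K : Set V)) {x y : V}
    (hx : x ∈ K) (hy : y ∈ K) (hne : x ≠ y) : S.Adj x y :=
  hK hx hy hne

lemma p4c_loc (hpart : K ∪ I = Finset.univ) (hK : S.IsClique (K : Set V))
    (hI : Sᶜ.IsClique (I : Set V)) {a b c d : V} (h : P4c S a b c d) :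
    a ∈ I ∧ b ∈ K ∧ c ∈ K ∧ d ∈ I := by
  obtain ⟨hab, hac, had, hbc, hbd, hcd, e1, e2, e3, n1, n2, n3⟩ := h
  have haI : a ∈ I := by
    rcases memKI hpart a with haK | haI
    · have hcI : c ∈ I := by
        rcases memKI hpart c with hcK | hcI
        · exact absurd (kadj hK haK hcK hac) n1
        · exact hcI
      have hdI : d ∈ I := by
        rcases memKI hpart d with hdK | hdI
        · exact absurd (kadj hK haK hdK had) n2
        · exact hdI
      exact absurd e3 (inonadj hI hcI hdI hcd)
    · exact haI
  have hdI : d ∈ I := by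
    rcases memKI hpart d with hdK | hdI
    · have hbI : b ∈ I := by
        rcases memKI hpart b with hbK | hbI
        · exact absurd (kadj hK hbK hdK hbd) n3
        · exact hbI
      exact absurd e1 (inonadj hI haI hbI hab)
    · exact hdI
  have hbK : b ∈ K := by
    rcases memKI hpart b with hbK | hbI
    · exact hbK
    · exact absurd e1 (inonadj hI haI hbI hab)
  have hcK : c ∈ K := by
    rcases memKI hpart c with hcK | hcI
    · exact hcK
    · exact absurd e3 (inonadj hI hcI hdI hcd)
  exact ⟨haI, hbK, hcK, hdI⟩

lemma phi_adj_of_p4c {p x y q : V} (hp : p ∈ I) (hq : q ∈ I) (h : P4c S p x y q) :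
    (phiGe S I).Adj ⟨p, hp⟩ ⟨q, hq⟩ := by
  refine (SimpleGraph.fromRel_adj _ _ _).mpr ⟨?_, Or.inl ?_⟩
  · intro hpq
    exact h.2.2.1 (congrArg Subtype.val hpq)
  · exact sigma_pos_iff.mpr ⟨{p, x, y, q}, p4c_isInducedP4 h, by simp, by simp⟩

lemma ne_of_KI (hdisj : Disjoint K I) {x y : V} (hx : x ∈ K) (hy : y ∈ I) : x ≠ y :=
  fun h => (Finset.disjoint_left.mp hdisj hx) (h ▸ hy)

lemma key_core (hpart : K ∪ I = Finset.univ) (hdisj : Disjoint K I)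
    (hK : S.IsClique (K : Set V)) (hI : Sᶜ.IsClique (I : Set V))
    {a b c d e f h : V} (hP : P4c S a b c d) (hQ : P4c S e f c h)
    (hd : d ∈ I) (hh : h ∈ I) :
    (phiGe S I).Reachable ⟨d, hd⟩ ⟨h, hh⟩ := by
  obtain ⟨haI, hbK, hcK, hdI⟩ := p4c_loc hpart hK hI hP
  obtain ⟨heI, hfK, -, hhI⟩ := p4c_loc hpart hK hI hQ
  have Eda : (phiGe S I).Adj ⟨d, hd⟩ ⟨a, haI⟩ := phi_adj_of_p4c hd haI (p4c_rev hP)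
  have Eeh : (phiGe S I).Adj ⟨e, heI⟩ ⟨h, hh⟩ := phi_adj_of_p4c heI hh hQ
  obtain ⟨hab, hac, had, hbc, hbd, hcd, e1, e2, e3, n1, n2, n3⟩ := hP
  obtain ⟨hef, hec, heh, hfc, hfh, hch, q1, q2, q3, m1, m2, m3⟩ := hQ
  by_cases hdh : d = h
  · subst hdh
    exact SimpleGraph.Reachable.refl _
  by_cases hae : a = e
  · subst hae
    exact Eda.reachable.trans Eeh.reachable
  by_cases hfa : S.Adj f a
  · have hah : a ≠ h := by
      intro h'
      exact n1 (by rw [h']; exact q3.symm)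
    have hPnew : P4c S a f c h :=
      ⟨(ne_of_KI hdisj hfK haI).symm, hac, hah, hfc, hfh, hch,
        hfa.symm, q2, q3, n1, inonadj hI haI hhI hah, m3⟩
    exact Eda.reachable.trans (phi_adj_of_p4c haI hh hPnew).reachable
  by_cases hbe : S.Adj b e
  · have hed : e ≠ d := by
      intro h'
      exact m1 (by rw [h']; exact e3.symm)
    have hQnew : P4c S e b c d :=
      ⟨(ne_of_KI hdisj hbK heI).symm, hec, hed, hbc, hbd, hcd,
        hbe.symm, e2, e3, m1, inonadj hI heI hdI hed, n3⟩
    exact ((phi_adj_of_p4c heI hd hQnew).symm.reachable).trans Eeh.reachable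
  · have hbf : b ≠ f := by
      intro h'
      exact hbe (by rw [h']; exact q1.symm)
    have hnew : P4c S a b f e :=
      ⟨hab, (ne_of_KI hdisj hfK haI).symm, hae, hbf, ne_of_KI hdisj hbK heI, hef.symm,
        e1, kadj hK hbK hfK hbf, q1.symm, fun h' => hfa h'.symm,
        inonadj hI haI heI hae, hbe⟩
    exact Eda.reachable.trans
      ((phi_adj_of_p4c haI heI hnew).reachable.trans Eeh.reachable)

lemma key_share (hpart : K ∪ I = Finset.univ) (hdisj : Disjoint K I)
    (hK : S.IsClique (K : Set V)) (hI : Sᶜ.IsClique (I : Set V))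
    {a b c d e f g h : V} (hP : P4c S a b c d) (hQ : P4c S e f g h)
    {x : V} (hx1 : x = a ∨ x = b ∨ x = c ∨ x = d) (hx2 : x = e ∨ x = f ∨ x = g ∨ x = h)
    (hd : d ∈ I) (hh : h ∈ I) :
    (phiGe S I).Reachable ⟨d, hd⟩ ⟨h, hh⟩ := by
  obtain ⟨haI, hbK, hcK, hdI⟩ := p4c_loc hpart hK hI hP
  obtain ⟨heI, hfK, hgK, hhI⟩ := p4c_loc hpart hK hI hQ
  have Eda : (phiGe S I).Adj ⟨d, hd⟩ ⟨a, haI⟩ := phi_adj_of_p4c hd haI (p4c_rev hP)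
  have Eeh : (phiGe S I).Adj ⟨e, heI⟩ ⟨h, hh⟩ := phi_adj_of_p4c heI hh hQ
  rcases hx1 with rfl | rfl | rfl | rfl <;> rcases hx2 with h2 | h2 | h2 | h2
  · subst h2; exact Eda.reachable.trans Eeh.reachable
  · exact absurd h2 (ne_of_KI hdisj hfK haI).symm
  · exact absurd h2 (ne_of_KI hdisj hgK haI).symm
  · subst h2; exact Eda.reachable
  · exact absurd h2 (ne_of_KI hdisj hbK heI)
  · have hQ' := p4c_rev hQ
    rw [← h2] at hQ'
    exact Eda.reachable.trans
      ((key_core hpart hdisj hK hI (p4c_rev hP) hQ' haI heI).trans Eeh.reachable)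
  · have hQ' := hQ
    rw [← h2] at hQ'
    exact Eda.reachable.trans (key_core hpart hdisj hK hI (p4c_rev hP) hQ' haI hh)
  · exact absurd h2 (ne_of_KI hdisj hbK hhI)
  · exact absurd h2 (ne_of_KI hdisj hcK heI)
  · have hQ' := p4c_rev hQ
    rw [← h2] at hQ'
    exact (key_core hpart hdisj hK hI hP hQ' hd heI).trans Eeh.reachable
  · have hQ' := hQ
    rw [← h2] at hQ'
    exact key_core hpart hdisj hK hI hP hQ' hd hh
  · exact absurd h2 (ne_of_KI hdisj hcK hhI)
  · subst h2; exact Eeh.reachable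
  · exact absurd h2 (ne_of_KI hdisj hfK hdI).symm
  · exact absurd h2 (ne_of_KI hdisj hgK hdI).symm
  · subst h2; exact SimpleGraph.Reachable.refl _

lemma end_cases (hdisj : Disjoint K I) {a b c d p : V} (hbK : b ∈ K) (hcK : c ∈ K)
    (hpI : p ∈ I) (hp : p ∈ ({a, b, c, d} : Finset V)) : p = a ∨ p = d := by
  simp only [Finset.mem_insert, Finset.mem_singleton] at hp
  rcases hp with rfl | rfl | rfl | rfl
  · exact Or.inl rfl
  · exact absurd rfl (ne_of_KI hdisj hbK hpI)
  · exact absurd rfl (ne_of_KI hdisj hcK hpI)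
  · exact Or.inr rfl

lemma reach_of_p4s (hpart : K ∪ I = Finset.univ) (hdisj : Disjoint K I)
    (hK : S.IsClique (K : Set V)) (hI : Sᶜ.IsClique (I : Set V))
    {T1 T2 : Finset V} (h1 : IsInducedP4 S T1) (h2 : IsInducedP4 S T2)
    {x : V} (hx1 : x ∈ T1) (hx2 : x ∈ T2)
    {p q : V} (hpI : p ∈ I) (hqI : q ∈ I) (hp : p ∈ T1) (hq : q ∈ T2) :
    (phiGe S I).Reachable ⟨p, hpI⟩ ⟨q, hqI⟩ := by
  obtain ⟨a, b, c, d, rfl, hP⟩ := isInducedP4_p4c h1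
  obtain ⟨e, f, g, h, rfl, hQ⟩ := isInducedP4_p4c h2
  obtain ⟨haI, hbK, hcK, hdI⟩ := p4c_loc hpart hK hI hP
  obtain ⟨heI, hfK, hgK, hhI⟩ := p4c_loc hpart hK hI hQ
  have base : (phiGe S I).Reachable ⟨d, hdI⟩ ⟨h, hhI⟩ :=
    key_share hpart hdisj hK hI hP hQ (by simpa using hx1) (by simpa using hx2) hdI hhI
  have Eda : (phiGe S I).Adj ⟨d, hdI⟩ ⟨a, haI⟩ := phi_adj_of_p4c hdI haI (p4c_rev hP)
  have Eeh : (phiGe S I).Adj ⟨e, heI⟩ ⟨h, hhI⟩ := phi_adj_of_p4c heI hhI hQ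
  rcases end_cases hdisj hbK hcK hpI hp with rfl | rfl <;>
    rcases end_cases hdisj hfK hgK hqI hq with rfl | rfl
  · exact Eda.symm.reachable.trans (base.trans Eeh.symm.reachable)
  · exact Eda.symm.reachable.trans base
  · exact base.trans Eeh.symm.reachable
  · exact base

lemma walk_reach (hpart : K ∪ I = Finset.univ) (hdisj : Disjoint K I)
    (hK : S.IsClique (K : Set V)) (hI : Sᶜ.IsClique (I : Set V)) :
    ∀ {x y : V}, (a4Graph S).Walk x y →
    ∀ {T1 T2 : Finset V}, IsInducedP4 S T1 → IsInducedP4 S T2 → x ∈ T1 → y ∈ T2 →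
    ∀ {p q : V} (hpI : p ∈ I) (hqI : q ∈ I), p ∈ T1 → q ∈ T2 →
    (phiGe S I).Reachable ⟨p, hpI⟩ ⟨q, hqI⟩ := by
  intro x y w
  induction w with
  | nil =>
    intro T1 T2 h1 h2 hx hy p q hpI hqI hp hq
    exact reach_of_p4s hpart hdisj hK hI h1 h2 hx hy hpI hqI hp hq
  | cons hadj w ih =>
    intro T1 T2 h1 h2 hx hy p q hpI hqI hp hq
    rw [a4Graph, SimpleGraph.fromRel_adj] at hadj
    obtain ⟨-, hT | hT⟩ := hadj
    · obtain ⟨T, hTp4, hxT, hx'T⟩ := hT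
      obtain ⟨a, b, c, d, rfl, hPc⟩ := isInducedP4_p4c hTp4
      have haI := (p4c_loc hpart hK hI hPc).1
      have haT : a ∈ ({a, b, c, d} : Finset V) := by simp
      exact (reach_of_p4s hpart hdisj hK hI h1 hTp4 hx hxT hpI haI hp haT).trans
        (ih hTp4 h2 hx'T hy haI hqI haT hq)
    · obtain ⟨T, hTp4, hx'T, hxT⟩ := hT
      obtain ⟨a, b, c, d, rfl, hPc⟩ := isInducedP4_p4c hTp4
      have haI := (p4c_loc hpart hK hI hPc).1
      have haT : a ∈ ({a, b, c, d} : Finset V) := by simp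
      exact (reach_of_p4s hpart hdisj hK hI h1 hTp4 hx hxT hpI haI hp haT).trans
        (ih hTp4 h2 hx'T hy haI hqI haT hq)

end Main

def phiToA4Hom {V : Type*} [Fintype V] [DecidableEq V] (S : SimpleGraph V) (I : Finset V) :
    phiGe S I →g a4Graph S where
  toFun := Subtype.val
  map_rel' := by
    intro u v huv
    rw [phiGe, SimpleGraph.fromRel_adj] at huv
    obtain ⟨hne, hσ⟩ := huv
    rw [a4Graph, SimpleGraph.fromRel_adj]
    refine ⟨fun h => hne (Subtype.ext h), ?_⟩
    rcases hσ with hσ | hσ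
    · exact Or.inl (sigma_pos_iff.mp hσ)
    · obtain ⟨T, hT, hv, hu⟩ := sigma_pos_iff.mp hσ
      exact Or.inl ⟨T, hT, hu, hv⟩

theorem stmt14 {V : Type*} [Fintype V] [DecidableEq V] [Nonempty V]
    (S : SimpleGraph V) [DecidableRel S.Adj] (K I : Finset V)
    (hpart : K ∪ I = Finset.univ) (hdisj : Disjoint K I)
    (hK : S.IsClique (K : Set V)) (hI : Sᶜ.IsClique (I : Set V))
    (hact : ∀ x : V, ∃ T : Finset V, IsInducedP4 S T ∧ x ∈ T) :
    (phiGe S I).Connected ↔ (a4Graph S).Connected := by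
  constructor
  · intro hphi
    rw [connected_iff]
    refine ⟨?_, inferInstance⟩
    intro x y
    obtain ⟨T1, h1, hx⟩ := hact x
    obtain ⟨T2, h2, hy⟩ := hact y
    obtain ⟨a, b, c, d, rfl, hP⟩ := isInducedP4_p4c h1
    obtain ⟨e, f, g, h, rfl, hQ⟩ := isInducedP4_p4c h2
    have haI := (p4c_loc hpart hK hI hP).1
    have heI := (p4c_loc hpart hK hI hQ).1
    have rxa : (a4Graph S).Reachable x a := by
      by_cases hxa : x = a
      · exact hxa ▸ SimpleGraph.Reachable.refl _
      · refine SimpleGraph.Adj.reachable ?_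
        rw [a4Graph, SimpleGraph.fromRel_adj]
        exact ⟨hxa, Or.inl ⟨_, h1, hx, by simp⟩⟩
    have rye : (a4Graph S).Reachable y e := by
      by_cases hye : y = e
      · exact hye ▸ SimpleGraph.Reachable.refl _
      · refine SimpleGraph.Adj.reachable ?_
        rw [a4Graph, SimpleGraph.fromRel_adj]
        exact ⟨hye, Or.inl ⟨_, h2, hy, by simp⟩⟩
    have rae : (a4Graph S).Reachable a e := by
      have := (hphi.preconnected ⟨a, haI⟩ ⟨e, heI⟩).map (phiToA4Hom S I)
      simpa [phiToA4Hom] using this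
    exact rxa.trans (rae.trans rye.symm)
  · intro ha4
    rw [connected_iff]
    constructor
    · rintro ⟨u, hu⟩ ⟨v, hv⟩
      obtain ⟨T1, h1, hu1⟩ := hact u
      obtain ⟨T2, h2, hv2⟩ := hact v
      obtain ⟨w⟩ := ha4.preconnected u v
      exact walk_reach hpart hdisj hK hI w h1 h2 hu1 hv2 hu hv hu1 hv2
    · obtain ⟨T, hT, -⟩ := hact (Classical.arbitrary V)
      obtain ⟨a, b, c, d, rfl, hP⟩ := isInducedP4_p4c hT
      exact ⟨⟨a, (p4c_loc hpart hK hI hP).1⟩⟩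
end
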